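/- arXiv:2105.02002 — 8 statements merged into one kernel-verified Lean document; each statement's English description precedes it below -/
import Mathlib

section
/- The optimal revenue rate under uniform pricing is nondecreasing in the number of servers: R(K, p*_K·1) ≤ R(K+1, p*_{K+1}·1) for every K ≥ 1, where p*_K and p*_{K+1} are maximizers of the uniform-price revenue rate for K and K+1 servers respectively. -/
/-- The optimal revenue rate under uniform pricing is
nondecreasing in the number of servers: `R(K, p*_K·1) ≤ R(K+1, p*_{K+1}·1)`
for every `K ≥ 1`, where `p*_K` maximizes `p ↦ R(K, p·1)` over `p ≥ 0`. -/
theorem stmt_5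
    (G : ℝ → ℝ) (hG0 : ∀ u, 0 ≤ G u) (hG1 : ∀ u, G u ≤ 1) (hGanti : Antitone G)
    (μ lam : ℝ) (hμ : 0 < μ) (hlam : 0 < lam)
    (φ : ℝ → ℝ) (hφpos : ∀ s, 0 < φ s) (hφle : ∀ s, φ s ≤ 1)
    (β : ℕ → ℝ)
    (hβ : ∀ j, β j = ∏ i ∈ Finset.Icc 1 j, (1 - φ (i * μ)) / φ (i * μ))
    (πb : ℕ → ℝ → ℝ)
    (hπ : ∀ (K : ℕ) (p : ℝ), 0 < G p →
      πb K p = (∑ j ∈ Finset.range (K + 1), (K.choose j : ℝ) * (G p)⁻¹ ^ j * β j)⁻¹)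
    (R : ℕ → ℝ → ℝ)
    (hR : ∀ (K : ℕ) (p : ℝ), R K p = lam * p * G p * (1 - πb K p))
    (pstar : ℕ → ℝ)
    (hpstar : ∀ K : ℕ, 0 ≤ pstar K ∧ ∀ p : ℝ, 0 ≤ p → R K p ≤ R K (pstar K)) :
    ∀ K : ℕ, 1 ≤ K → R K (pstar K) ≤ R (K + 1) (pstar (K + 1)) := by
  have hβnn : ∀ j, 0 ≤ β j := by
    intro j
    rw [hβ]
    apply Finset.prod_nonneg
    intro i _
    exact div_nonneg (by linarith [hφle (i * μ)]) (hφpos (i * μ)).le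
  have key : ∀ (K : ℕ) (p : ℝ), 0 ≤ p → R K p ≤ R (K + 1) p := by
    intro K p hp
    rw [hR, hR]
    rcases eq_or_lt_of_le (hG0 p) with hGz | hGpos
    · rw [← hGz]; ring_nf; simp
    · set S : ℕ → ℝ := fun K =>
        ∑ j ∈ Finset.range (K + 1), (K.choose j : ℝ) * (G p)⁻¹ ^ j * β j with hS
      have htermnn : ∀ (K j : ℕ), 0 ≤ (K.choose j : ℝ) * (G p)⁻¹ ^ j * β j := by
        intro K j
        exact mul_nonneg (mul_nonneg (Nat.cast_nonneg _)
          (pow_nonneg (inv_nonneg.2 (hG0 p)) j)) (hβnn j)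
      have hS1 : ∀ K : ℕ, 1 ≤ S K := by
        intro K
        have h0 : ((K.choose 0 : ℝ)) * (G p)⁻¹ ^ 0 * β 0 = 1 := by
          simp [hβ 0]
        calc (1:ℝ) = (K.choose 0 : ℝ) * (G p)⁻¹ ^ 0 * β 0 := h0.symm
          _ ≤ S K := Finset.single_le_sum (fun j _ => htermnn K j)
              (Finset.mem_range.2 (Nat.succ_pos K))
      have hSle : S K ≤ S (K + 1) := by
        calc S K ≤ ∑ j ∈ Finset.range (K + 1),
              ((K+1).choose j : ℝ) * (G p)⁻¹ ^ j * β j := by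
              apply Finset.sum_le_sum
              intro j _
              have hc : (K.choose j : ℝ) ≤ ((K+1).choose j : ℝ) := by
                exact_mod_cast Nat.choose_le_choose j (Nat.le_succ K)
              have h1 : (0:ℝ) ≤ (G p)⁻¹ ^ j * β j :=
                mul_nonneg (pow_nonneg (inv_nonneg.2 (hG0 p)) j) (hβnn j)
              calc (K.choose j : ℝ) * (G p)⁻¹ ^ j * β j
                  = (K.choose j : ℝ) * ((G p)⁻¹ ^ j * β j) := by ring
                _ ≤ ((K+1).choose j : ℝ) * ((G p)⁻¹ ^ j * β j) :=
                    mul_le_mul_of_nonneg_right hc h1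
                _ = ((K+1).choose j : ℝ) * (G p)⁻¹ ^ j * β j := by ring
          _ ≤ S (K + 1) := by
              apply Finset.sum_le_sum_of_subset_of_nonneg
              · exact Finset.range_subset_range.2 (by omega)
              · intro j _ _; exact htermnn (K+1) j
      have hπle : πb (K + 1) p ≤ πb K p := by
        rw [hπ K p hGpos, hπ (K + 1) p hGpos]
        exact inv_anti₀ (by linarith [hS1 K]) hSle
      have hfac : 0 ≤ lam * p * G p := by positivity
      have : (1 - πb K p) ≤ (1 - πb (K + 1) p) := by linarith
      exact mul_le_mul_of_nonneg_left this hfac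
  intro K _
  calc R K (pstar K) ≤ R (K + 1) (pstar K) := key K (pstar K) (hpstar K).1
    _ ≤ R (K + 1) (pstar (K + 1)) := (hpstar (K + 1)).2 (pstar K) (hpstar K).1
end

section
/- The gap between the optimal revenue rate and the best uniform-price revenue rate decays at least as 1/K: with β_1 = (1 − φ(μ))/φ(μ) > 0, the blocking probability satisfies π_K(p*_∞) ≤ 1/(1 + K·Ḡ(p*_∞)^{−1}·β_1), and for any R* with R(K, p*_K·1) ≤ R* ≤ λ·p*_∞·Ḡ(p*_∞) (in particular the optimal revenue rate), one has R* − R(K, p*_K·1) ≤ R(K, p*_K·1)/(β_1·K). -/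
/-- The gap between the optimal revenue rate and the best
uniform-price revenue rate decays at least as `1/K`: with
`β₁ = (1 − φ(μ))/φ(μ) > 0`, `π_K(p*_∞) ≤ 1/(1 + K·Ḡ(p*_∞)⁻¹·β₁)`, and for any
`R*` with `R(K, p*_K·1) ≤ R* ≤ λ·p*_∞·Ḡ(p*_∞)`,
`R* − R(K, p*_K·1) ≤ R(K, p*_K·1)/(β₁·K)`. -/
theorem stmt_9
    (G : ℝ → ℝ) (hG0 : ∀ u, 0 ≤ G u) (hG1 : ∀ u, G u ≤ 1) (hGanti : Antitone G)
    (μ lam : ℝ) (hμ : 0 < μ) (hlam : 0 < lam)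
    (φ : ℝ → ℝ) (hφpos : ∀ s, 0 < φ s) (hφle : ∀ s, φ s ≤ 1)
    (β : ℕ → ℝ)
    (hβ : ∀ j, β j = ∏ i ∈ Finset.Icc 1 j, (1 - φ (i * μ)) / φ (i * μ))
    (hβ1 : 0 < β 1)
    (K : ℕ) (hK : 1 ≤ K)
    (πb : ℝ → ℝ)
    (hπ : ∀ p : ℝ, 0 < G p →
      πb p = (∑ j ∈ Finset.range (K + 1), (K.choose j : ℝ) * (G p)⁻¹ ^ j * β j)⁻¹)
    (R : ℝ → ℝ)
    (hR : ∀ p : ℝ, R p = lam * p * G p * (1 - πb p))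
    (pinf pK : ℝ) (hpinf0 : 0 ≤ pinf) (hpK0 : 0 ≤ pK)
    (hGinf : 0 < G pinf) (hGK : 0 < G pK)
    (hinfmax : ∀ p : ℝ, 0 ≤ p → p * G p ≤ pinf * G pinf)
    (hKmax : ∀ p : ℝ, 0 ≤ p → R p ≤ R pK) :
    πb pinf ≤ (1 + (K : ℝ) * (G pinf)⁻¹ * β 1)⁻¹ ∧
    ∀ Rstar : ℝ, R pK ≤ Rstar → Rstar ≤ lam * (pinf * G pinf) →
      Rstar - R pK ≤ R pK / (β 1 * K) := by
  set g := G pinf with hg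
  have hgpos : 0 < g := hGinf
  have hg1 : g ≤ 1 := hG1 pinf
  have hginv : (1:ℝ) ≤ g⁻¹ := by
    nlinarith [mul_inv_cancel₀ hgpos.ne', inv_pos.mpr hgpos]
  have hβnn : ∀ j, 0 ≤ β j := by
    intro j
    rw [hβ]
    apply Finset.prod_nonneg
    intro i _
    exact div_nonneg (by linarith [hφle (i * μ)]) (hφpos (i * μ)).le
  have hβ0 : β 0 = 1 := by rw [hβ]; simp
  set S := ∑ j ∈ Finset.range (K + 1), (K.choose j : ℝ) * g⁻¹ ^ j * β j with hS
  have hπS : πb pinf = S⁻¹ := hπ pinf hGinf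
  have hKpos : (0:ℝ) < K := by exact_mod_cast hK
  have htermnn : ∀ j ∈ Finset.range (K + 1), 0 ≤ (K.choose j : ℝ) * g⁻¹ ^ j * β j := by
    intro j _
    have := hβnn j
    positivity
  have hsub : Finset.range 2 ⊆ Finset.range (K + 1) := Finset.range_subset_range.mpr (by omega)
  have hS1 : (1:ℝ) + (K:ℝ) * g⁻¹ * β 1 ≤ S := by
    have h := Finset.sum_le_sum_of_subset_of_nonneg hsub (fun i hi _ => htermnn i hi)
    calc (1:ℝ) + (K:ℝ) * g⁻¹ * β 1
        = ∑ j ∈ Finset.range 2, (K.choose j : ℝ) * g⁻¹ ^ j * β j := by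
          simp [Finset.sum_range_succ, hβ0, Nat.choose_one_right]
      _ ≤ S := h
  have hden : (0:ℝ) < 1 + (K:ℝ) * g⁻¹ * β 1 := by
    have : (0:ℝ) ≤ (K:ℝ) * g⁻¹ * β 1 := by positivity
    linarith
  have hSpos : 0 < S := lt_of_lt_of_le hden hS1
  have hπle : πb pinf ≤ (1 + (K:ℝ) * g⁻¹ * β 1)⁻¹ := by
    rw [hπS]; gcongr
  refine ⟨hπle, ?_⟩
  intro Rstar h1 h2
  have hdK : (0:ℝ) < 1 + (K:ℝ) * β 1 := by positivity
  have hS2 : (1:ℝ) + (K:ℝ) * β 1 ≤ S := by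
    have : (0:ℝ) ≤ (K:ℝ) * β 1 * (g⁻¹ - 1) :=
      mul_nonneg (mul_nonneg hKpos.le hβ1.le) (by linarith)
    nlinarith [hS1]
  have hπle2 : πb pinf ≤ (1 + (K:ℝ) * β 1)⁻¹ := by
    rw [hπS]; gcongr
  have hπ0 : 0 ≤ πb pinf := by rw [hπS]; positivity
  have hx : πb pinf * (1 + (K:ℝ) * β 1) ≤ 1 := by
    have := mul_le_mul_of_nonneg_right hπle2 hdK.le
    rwa [inv_mul_cancel₀ hdK.ne'] at this
  have hA : (0:ℝ) ≤ lam * (pinf * g) := by positivity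
  have hy : lam * (pinf * g) * (1 - πb pinf) ≤ R pK := by
    have := hKmax pinf hpinf0
    rw [hR pinf] at this
    nlinarith [this]
  have hz : lam * (pinf * g) * (πb pinf * ((K:ℝ) * β 1)) ≤ R pK := by
    nlinarith [mul_le_mul_of_nonneg_left hx hA]
  have hβK : (0:ℝ) < β 1 * K := by positivity
  rw [le_div_iff₀ hβK]
  have h3 : Rstar - R pK ≤ lam * (pinf * g) * πb pinf := by linarith [hy, h2]
  have h4 := mul_le_mul_of_nonneg_right h3 hβK.le
  linarith [h4, hz]
end

section
/- Asymptotic revenue rate under fixed uniform pricing: suppose the family of interarrival distributions satisfies lim_{λ→∞} λ·(1 − φ_λ(μ)) = μ̃ for some finite μ̃ ≥ 0. Then for any fixed uniform price p with Ḡ(p) > 0, the mean revenue rate of the K-server system satisfies lim_{λ→∞} R_λ(K, p·1) = μ̃·p·K. -/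
/-!
Since `U_λ ≥ 0`, Bernoulli's inequality `x ^ m ≥ 1 + m (x - 1)` applied to `x = e^{-μ U_λ}` gives
`1 - m (1 - φ_λ(μ)) ≤ φ_λ(mμ) ≤ 1`, so every `φ_λ(mμ)` tends to `1` once `λ (1 - φ_λ(μ))` converges.
Hence `λ β_1(λ) → μ̃` while `λ β_j(λ) → 0` for `j ≥ 2` (a further factor tends to `0`), so the
normalizing sum `S_λ = 1/π_K` satisfies `λ (S_λ - 1) → K μ̃ / Ḡ(p)`, and
`R_λ = p Ḡ(p) · λ (S_λ - 1) / S_λ → μ̃ p K`.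
-/

open MeasureTheory Filter Topology Finset

section Laplace

variable {Ω : Type*} [MeasurableSpace Ω] {P : Measure Ω} {X : Ω → ℝ}

lemma integrable_exp_neg_mul_of_nonneg [IsFiniteMeasure P] (hXm : Measurable X)
    (hX : ∀ ω, 0 ≤ X ω) {s : ℝ} (hs : 0 ≤ s) :
    Integrable (fun ω => Real.exp (-s * X ω)) P := by
  refine (integrable_const (1 : ℝ)).mono'
    (Real.measurable_exp.comp (hXm.const_mul _)).aestronglyMeasurable ?_
  filter_upwards with ω
  rw [Real.norm_of_nonneg (Real.exp_nonneg _), Real.exp_le_one_iff]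
  nlinarith [hX ω]

lemma integral_exp_neg_mul_le_one [IsProbabilityMeasure P] (hXm : Measurable X)
    (hX : ∀ ω, 0 ≤ X ω) {s : ℝ} (hs : 0 ≤ s) :
    ∫ ω, Real.exp (-s * X ω) ∂P ≤ 1 := by
  calc ∫ ω, Real.exp (-s * X ω) ∂P ≤ ∫ _, (1 : ℝ) ∂P :=
        integral_mono (integrable_exp_neg_mul_of_nonneg hXm hX hs) (integrable_const 1)
          fun ω => Real.exp_le_one_iff.mpr (by nlinarith [hX ω])
    _ = 1 := by simp

lemma one_sub_nat_mul_le_integral_exp_neg_nat_mul [IsProbabilityMeasure P]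
    (hXm : Measurable X) (hX : ∀ ω, 0 ≤ X ω) {s : ℝ} (hs : 0 ≤ s) (m : ℕ) :
    1 - m * (1 - ∫ ω, Real.exp (-s * X ω) ∂P) ≤ ∫ ω, Real.exp (-(m * s) * X ω) ∂P := by
  have hint := integrable_exp_neg_mul_of_nonneg (P := P) hXm hX hs
  have hbernoulli : ∀ ω, (1 - m) + m * Real.exp (-s * X ω) ≤ Real.exp (-(m * s) * X ω) := by
    intro ω
    have hpow : Real.exp (-(m * s) * X ω) = Real.exp (-s * X ω) ^ m := by
      rw [← Real.exp_nat_mul]; ring_nf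
    have := one_add_mul_le_pow (by linarith [Real.exp_pos (-s * X ω)] :
      (-2 : ℝ) ≤ Real.exp (-s * X ω) - 1) m
    rw [add_sub_cancel] at this
    rw [hpow]
    linarith
  have hmono : ∫ ω, ((1 - m) + m * Real.exp (-s * X ω)) ∂P ≤ ∫ ω, Real.exp (-(m * s) * X ω) ∂P :=
    integral_mono ((integrable_const _).add (hint.const_mul _))
      (integrable_exp_neg_mul_of_nonneg hXm hX (by positivity)) hbernoulli
  rw [integral_add (integrable_const _) (hint.const_mul _), integral_const_mul] at hmono
  simp only [integral_const, probReal_univ, one_smul] at hmono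
  linarith

lemma tendsto_integral_exp_neg_nat_mul [IsProbabilityMeasure P] {U : ℝ → Ω → ℝ} {μ : ℝ}
    (hμ : 0 ≤ μ) (hU : ∀ᶠ l in atTop, Measurable (U l) ∧ ∀ ω, 0 ≤ U l ω)
    (h : Tendsto (fun l => ∫ ω, Real.exp (-μ * U l ω) ∂P) atTop (𝓝 1)) (m : ℕ) :
    Tendsto (fun l => ∫ ω, Real.exp (-(m * μ) * U l ω) ∂P) atTop (𝓝 1) := by
  have hlower : Tendsto (fun l => 1 - m * (1 - ∫ ω, Real.exp (-μ * U l ω) ∂P)) atTop (𝓝 1) := by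
    simpa using ((h.const_sub 1).const_mul (m : ℝ)).const_sub 1
  refine tendsto_of_tendsto_of_tendsto_of_le_of_le' hlower tendsto_const_nhds ?_ ?_
  · filter_upwards [hU] with l hl
    exact one_sub_nat_mul_le_integral_exp_neg_nat_mul hl.1 hl.2 hμ m
  · filter_upwards [hU] with l hl
    exact integral_exp_neg_mul_le_one hl.1 hl.2 (by positivity)

end Laplace

section Asymptotics

lemma tendsto_nhds_zero_of_tendsto_id_mul {f : ℝ → ℝ} {a : ℝ}
    (h : Tendsto (fun l => l * f l) atTop (𝓝 a)) : Tendsto f atTop (𝓝 0) := by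
  have := tendsto_inv_atTop_zero.mul h
  rw [zero_mul] at this
  refine this.congr' ?_
  filter_upwards [eventually_gt_atTop 0] with l hl
  rw [← mul_assoc, inv_mul_cancel₀ hl.ne', one_mul]

lemma tendsto_id_mul_prod_Icc_one_succ {r : ℝ → ℕ → ℝ} {a : ℝ}
    (h1 : Tendsto (fun l => l * r l 1) atTop (𝓝 a))
    (h0 : ∀ i, Tendsto (fun l => r l i) atTop (𝓝 0)) (j : ℕ) :
    Tendsto (fun l => l * ∏ i ∈ Icc 1 (j + 1), r l i) atTop (𝓝 (if j = 0 then a else 0)) := by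
  induction j with
  | zero => simpa using h1
  | succ j ih =>
    have := ih.mul (h0 (j + 2))
    rw [mul_zero] at this
    refine this.congr fun l => ?_
    rw [prod_Icc_succ_top (b := j + 1) (by omega), mul_assoc]

lemma tendsto_id_mul_sum_choose_sub_one {b : ℝ → ℕ → ℝ} {a : ℝ} (K : ℕ) (x : ℝ)
    (hb0 : ∀ l, b l 0 = 1)
    (hb : ∀ j, Tendsto (fun l => l * b l (j + 1)) atTop (𝓝 (if j = 0 then a else 0))) :
    Tendsto (fun l => l * (∑ j ∈ range (K + 1), (K.choose j : ℝ) * x ^ j * b l j - 1))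
      atTop (𝓝 (K * x * a)) := by
  have hsum := tendsto_finsetSum (range K) fun j _ =>
    (tendsto_const_nhds (x := (K.choose (j + 1) : ℝ) * x ^ (j + 1))).mul (hb j)
  have hval : ∑ j ∈ range K, (K.choose (j + 1) : ℝ) * x ^ (j + 1) * (if j = 0 then a else 0)
      = K * x * a := by
    rcases K.eq_zero_or_pos with rfl | hK
    · simp
    · simp [hK]
  rw [hval] at hsum
  refine hsum.congr fun l => ?_
  rw [sum_range_succ', hb0]
  simp only [Nat.choose_zero_right, Nat.cast_one, pow_zero, mul_one, add_sub_cancel_right]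
  rw [mul_sum]
  exact sum_congr rfl fun j _ => by ring

lemma tendsto_id_mul_one_sub_inv {S : ℝ → ℝ} {c : ℝ}
    (h : Tendsto (fun l => l * (S l - 1)) atTop (𝓝 c)) :
    Tendsto (fun l => l * (1 - (S l)⁻¹)) atTop (𝓝 c) := by
  have hS : Tendsto S atTop (𝓝 1) := by
    simpa using (tendsto_nhds_zero_of_tendsto_id_mul h).add_const 1
  have := h.div hS one_ne_zero
  rw [div_one] at this
  refine this.congr' ?_
  filter_upwards [hS.eventually_ne one_ne_zero] with l hl
  rw [Pi.div_apply]
  field_simp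

end Asymptotics

theorem stmt_12_general {Ω : Type*} [MeasurableSpace Ω] (P : Measure Ω)
    [IsProbabilityMeasure P]
    (μ : ℝ) (hμ : 0 < μ)
    (G : ℝ → ℝ)
    (U : ℝ → Ω → ℝ)
    (hU : ∀ l : ℝ, 0 < l → (∀ ω, 0 ≤ U l ω) ∧ Measurable (U l) ∧
      Integrable (U l) P ∧ ∫ ω, U l ω ∂P = 1 / l)
    (φ : ℝ → ℝ → ℝ) (hφ : ∀ l s : ℝ, φ l s = ∫ ω, Real.exp (-s * U l ω) ∂P)
    (β : ℝ → ℕ → ℝ)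
    (hβ : ∀ (l : ℝ) (j : ℕ),
      β l j = ∏ i ∈ Finset.Icc 1 j, (1 - φ l (i * μ)) / φ l (i * μ))
    (K : ℕ)
    (p : ℝ) (hGp : 0 < G p)
    (πb : ℝ → ℝ)
    (hπ : ∀ l : ℝ,
      πb l = (∑ j ∈ Finset.range (K + 1), (K.choose j : ℝ) * (G p)⁻¹ ^ j * β l j)⁻¹)
    (R : ℝ → ℝ) (hR : ∀ l : ℝ, R l = l * p * G p * (1 - πb l))
    (mt : ℝ)
    (hlim : Tendsto (fun l : ℝ => l * (1 - φ l μ)) atTop (nhds mt)) :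
    Tendsto R atTop (nhds (mt * p * K)) := by
  have hUl : ∀ᶠ l in atTop, Measurable (U l) ∧ ∀ ω, 0 ≤ U l ω := by
    filter_upwards [eventually_gt_atTop 0] with l hl using ⟨(hU l hl).2.1, (hU l hl).1⟩
  have hφμ : Tendsto (fun l => φ l μ) atTop (𝓝 1) := by
    simpa using (tendsto_nhds_zero_of_tendsto_id_mul hlim).const_sub 1
  have hφ_nat_mul (m : ℕ) : Tendsto (fun l => φ l (m * μ)) atTop (𝓝 1) := by
    simp only [hφ] at hφμ ⊢
    exact tendsto_integral_exp_neg_nat_mul hμ.le hUl hφμ m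
  set r : ℝ → ℕ → ℝ := fun l i => (1 - φ l (i * μ)) / φ l (i * μ)
  have hr1 : Tendsto (fun l => l * r l 1) atTop (𝓝 mt) := by
    have := hlim.div hφμ one_ne_zero
    rw [div_one] at this
    exact this.congr fun l => by simp [r, mul_div_assoc]
  have hr0 (i : ℕ) : Tendsto (fun l => r l i) atTop (𝓝 0) := by
    have := ((hφ_nat_mul i).const_sub 1).div (hφ_nat_mul i) one_ne_zero
    rw [sub_self, zero_div] at this
    exact this.congr fun l => rfl
  have hS := tendsto_id_mul_sum_choose_sub_one (b := β) K (G p)⁻¹ (fun l => by simp [hβ])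
    fun j => (tendsto_id_mul_prod_Icc_one_succ hr1 hr0 j).congr fun l => by rw [hβ]
  convert (tendsto_id_mul_one_sub_inv hS).const_mul (p * G p) using 1
  · ext l
    rw [hR, hπ]
    ring
  · field_simp

/-- Asymptotic revenue rate under fixed uniform pricing: if
`lim_{λ→∞} λ(1 − φ_λ(μ)) = μ̃` for some finite `μ̃ ≥ 0`, then for any fixed
uniform price `p` with `Ḡ(p) > 0`, the mean revenue rate
`R_λ(K, p·1) = λ·p·Ḡ(p)·(1 − π_K(p; λ))` satisfies
`lim_{λ→∞} R_λ(K, p·1) = μ̃·p·K`. -/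
theorem stmt_12 {Ω : Type*} [MeasurableSpace Ω] (P : Measure Ω)
    [IsProbabilityMeasure P]
    (μ : ℝ) (hμ : 0 < μ)
    (G : ℝ → ℝ) (hG0 : ∀ u, 0 ≤ G u) (hG1 : ∀ u, G u ≤ 1) (hGanti : Antitone G)
    (U : ℝ → Ω → ℝ)
    (hU : ∀ l : ℝ, 0 < l → (∀ ω, 0 ≤ U l ω) ∧ Measurable (U l) ∧
      Integrable (U l) P ∧ ∫ ω, U l ω ∂P = 1 / l)
    (φ : ℝ → ℝ → ℝ) (hφ : ∀ l s : ℝ, φ l s = ∫ ω, Real.exp (-s * U l ω) ∂P)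
    (β : ℝ → ℕ → ℝ)
    (hβ : ∀ (l : ℝ) (j : ℕ),
      β l j = ∏ i ∈ Finset.Icc 1 j, (1 - φ l (i * μ)) / φ l (i * μ))
    (K : ℕ) (hK : 1 ≤ K)
    (p : ℝ) (hp : 0 ≤ p) (hGp : 0 < G p)
    (πb : ℝ → ℝ)
    (hπ : ∀ l : ℝ,
      πb l = (∑ j ∈ Finset.range (K + 1), (K.choose j : ℝ) * (G p)⁻¹ ^ j * β l j)⁻¹)
    (R : ℝ → ℝ) (hR : ∀ l : ℝ, R l = l * p * G p * (1 - πb l))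
    (mt : ℝ) (hmt : 0 ≤ mt)
    (hlim : Tendsto (fun l : ℝ => l * (1 - φ l μ)) atTop (nhds mt)) :
    Tendsto R atTop (nhds (mt * p * K)) :=
  stmt_12_general P μ hμ G U hU φ hφ β hβ K p hGp πb hπ R hR mt hlim
end

section
/- Unbounded revenue under arrival-rate-dependent uniform pricing: suppose μ̃ = lim_{λ→∞} λ·(1 − φ_λ(μ)) exists and μ̃ > 0, Ḡ(x) > 0 for every x ≥ 0 with lim_{x→∞} Ḡ(x) = 0 (so Ḡ has support ℝ₊ and lim_{y→0} Ḡ^{−1}(y) = ∞), and for each λ > 1 the uniform price p_λ is chosen with Ḡ(p_λ) = 1/λ. Then the mean revenue rate R_λ(K, p_λ·1) = p_λ·(1 − π_K(p_λ; λ)) satisfies lim_{λ→∞} R_λ(K, p_λ·1) = ∞. -/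
open MeasureTheory Filter

/-- Unbounded revenue under arrival-rate-dependent uniform
pricing: if `μ̃ = lim_{λ→∞} λ(1 − φ_λ(μ)) > 0`, `Ḡ(x) > 0` for every `x ≥ 0`
with `Ḡ(x) → 0` as `x → ∞`, and for each `λ > 1` the price `p_λ` satisfies
`Ḡ(p_λ) = 1/λ`, then `R_λ(K, p_λ·1) = p_λ·(1 − π_K(p_λ; λ)) → ∞`. -/
theorem stmt_13 {Ω : Type*} [MeasurableSpace Ω] (P : Measure Ω)
    [IsProbabilityMeasure P]
    (μ : ℝ) (hμ : 0 < μ)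
    (G : ℝ → ℝ) (hG0 : ∀ u, 0 ≤ G u) (hG1 : ∀ u, G u ≤ 1) (hGanti : Antitone G)
    (hGpos : ∀ x : ℝ, 0 ≤ x → 0 < G x)
    (hGlim : Tendsto G atTop (nhds 0))
    (U : ℝ → Ω → ℝ)
    (hU : ∀ l : ℝ, 0 < l → (∀ ω, 0 ≤ U l ω) ∧ Measurable (U l) ∧
      Integrable (U l) P ∧ ∫ ω, U l ω ∂P = 1 / l)
    (φ : ℝ → ℝ → ℝ) (hφ : ∀ l s : ℝ, φ l s = ∫ ω, Real.exp (-s * U l ω) ∂P)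
    (β : ℝ → ℕ → ℝ)
    (hβ : ∀ (l : ℝ) (j : ℕ),
      β l j = ∏ i ∈ Finset.Icc 1 j, (1 - φ l (i * μ)) / φ l (i * μ))
    (K : ℕ) (hK : 1 ≤ K)
    (mt : ℝ) (hmtpos : 0 < mt)
    (hlim : Tendsto (fun l : ℝ => l * (1 - φ l μ)) atTop (nhds mt))
    (pfun : ℝ → ℝ) (hpfun : ∀ l : ℝ, 1 < l → 0 ≤ pfun l ∧ G (pfun l) = 1 / l)
    (πb : ℝ → ℝ → ℝ)
    (hπ : ∀ (l q : ℝ), 0 < G q →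
      πb l q = (∑ j ∈ Finset.range (K + 1), (K.choose j : ℝ) * (G q)⁻¹ ^ j * β l j)⁻¹)
    (R : ℝ → ℝ) (hR : ∀ l : ℝ, R l = pfun l * (1 - πb l (pfun l))) :
    Tendsto R atTop atTop := by
  -- Basic facts about φ
  have hφmem : ∀ l s : ℝ, 0 < l → 0 ≤ s → 0 < φ l s ∧ φ l s ≤ 1 := by
    intro l s hl hs
    obtain ⟨hUpos, hUmeas, -, -⟩ := hU l hl
    have hmeas : Measurable fun ω => Real.exp (-s * U l ω) :=
      (hUmeas.const_mul (-s)).exp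
    have hle1 : ∀ ω, Real.exp (-s * U l ω) ≤ 1 := by
      intro ω
      rw [Real.exp_le_one_iff]
      exact mul_nonpos_of_nonpos_of_nonneg (neg_nonpos.mpr hs) (hUpos ω)
    have hint : Integrable (fun ω => Real.exp (-s * U l ω)) P := by
      apply Integrable.mono' (integrable_const (1 : ℝ)) hmeas.aestronglyMeasurable
      filter_upwards with ω
      rw [Real.norm_eq_abs, abs_of_pos (Real.exp_pos _)]
      exact hle1 ω
    constructor
    · rw [hφ]
      rw [integral_pos_iff_support_of_nonneg (fun ω => (Real.exp_pos _).le) hint]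
      have : Function.support (fun ω => Real.exp (-s * U l ω)) = Set.univ := by
        ext ω; simp [Function.mem_support, (Real.exp_pos _).ne']
      rw [this]
      simp
    · rw [hφ]
      calc ∫ ω, Real.exp (-s * U l ω) ∂P ≤ ∫ _, (1 : ℝ) ∂P :=
            integral_mono hint (integrable_const 1) hle1
        _ = 1 := by simp
  -- pfun tends to infinity
  have hp : Tendsto pfun atTop atTop := by
    rw [tendsto_atTop]
    intro M
    have hGM : 0 < G (max M 0) := hGpos _ (le_max_right _ _)
    filter_upwards [eventually_gt_atTop (max 1 (1 / G (max M 0)))] with l hl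
    have hl1 : 1 < l := lt_of_le_of_lt (le_max_left _ _) hl
    have hl0 : 0 < l := lt_trans one_pos hl1
    obtain ⟨hp0, hpG⟩ := hpfun l hl1
    by_contra h
    push_neg at h
    have h1 : G (max M 0) ≤ G (pfun l) :=
      hGanti (le_of_lt (lt_of_lt_of_le h (le_max_left _ _)))
    rw [hpG] at h1
    have h2 : 1 / G (max M 0) < l := lt_of_le_of_lt (le_max_right _ _) hl
    have h3 : 1 < l * G (max M 0) := (div_lt_iff₀ hGM).mp h2
    have h4 : G (max M 0) * l ≤ 1 := (le_div_iff₀ hl0).mp h1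
    nlinarith
  -- the eventual lower bound on R
  have hc : (0:ℝ) < 1 - (1 + mt / 2)⁻¹ := by
    have h1 : (1:ℝ) < 1 + mt / 2 := by linarith
    have := inv_lt_one_of_one_lt₀ h1
    linarith
  have hev : ∀ᶠ l in atTop, pfun l * (1 - (1 + mt / 2)⁻¹) ≤ R l := by
    have hev2 : ∀ᶠ l in atTop, mt / 2 < l * (1 - φ l μ) :=
      hlim.eventually (eventually_gt_nhds (by linarith))
    filter_upwards [hev2, eventually_gt_atTop (1:ℝ)] with l hl2 hl1
    have hl0 : 0 < l := lt_trans one_pos hl1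
    obtain ⟨hp0, hpG⟩ := hpfun l hl1
    have hGp : 0 < G (pfun l) := by rw [hpG]; positivity
    have hGinv : (G (pfun l))⁻¹ = l := by rw [hpG, one_div, inv_inv]
    have hφμ := hφmem l μ hl0 hμ.le
    -- β is nonneg
    have hβnn : ∀ j, 0 ≤ β l j := by
      intro j
      rw [hβ]
      apply Finset.prod_nonneg
      intro i hi
      have hiμ : (0:ℝ) ≤ (i:ℝ) * μ := by positivity
      rcases eq_or_lt_of_le hiμ with h | h
      · have := hφmem l ((i:ℝ) * μ) hl0 hiμ
        exact div_nonneg (by linarith [this.2]) (this.1.le)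
      · have := hφmem l ((i:ℝ) * μ) hl0 hiμ
        exact div_nonneg (by linarith [this.2]) (this.1.le)
    have hβ1 : β l 1 = (1 - φ l μ) / φ l μ := by
      rw [hβ]; simp
    -- the sum
    set S := ∑ j ∈ Finset.range (K + 1), (K.choose j : ℝ) * (G (pfun l))⁻¹ ^ j * β l j with hS
    have hterm0 : (K.choose 0 : ℝ) * (G (pfun l))⁻¹ ^ 0 * β l 0 = 1 := by
      rw [hβ]; simp
    have hterm1 : l * (1 - φ l μ) ≤ (K.choose 1 : ℝ) * (G (pfun l))⁻¹ ^ 1 * β l 1 := by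
      rw [hβ1, hGinv, Nat.choose_one_right, pow_one]
      have hb : 1 - φ l μ ≤ (1 - φ l μ) / φ l μ := by
        rw [le_div_iff₀ hφμ.1]
        nlinarith [hφμ.1, hφμ.2]
      have hKb : (1:ℝ) ≤ (K:ℝ) := by exact_mod_cast hK
      have hDnn : 0 ≤ (1 - φ l μ) / φ l μ :=
        div_nonneg (by linarith [hφμ.2]) hφμ.1.le
      calc l * (1 - φ l μ) ≤ l * ((1 - φ l μ) / φ l μ) :=
            mul_le_mul_of_nonneg_left hb hl0.le
        _ ≤ (K:ℝ) * l * ((1 - φ l μ) / φ l μ) :=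
            mul_le_mul_of_nonneg_right (by nlinarith : l ≤ (K:ℝ) * l) hDnn
    have hSlb : 1 + mt / 2 ≤ S := by
      have hsub : ({0, 1} : Finset ℕ) ⊆ Finset.range (K + 1) := by
        intro x hx
        simp only [Finset.mem_insert, Finset.mem_singleton] at hx
        rcases hx with rfl | rfl <;> simp [Nat.lt_succ_iff] <;> omega
      have hmono : ∑ j ∈ ({0, 1} : Finset ℕ), (K.choose j : ℝ) * (G (pfun l))⁻¹ ^ j * β l j ≤ S := by
        apply Finset.sum_le_sum_of_subset_of_nonneg hsub
        intro i _ _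
        have : (0:ℝ) ≤ (G (pfun l))⁻¹ ^ i := by positivity
        exact mul_nonneg (mul_nonneg (by positivity) this) (hβnn i)
      rw [Finset.sum_pair (by norm_num : (0:ℕ) ≠ 1), hterm0] at hmono
      linarith [hterm1, hl2]
    have hSpos : 0 < S := lt_of_lt_of_le (by linarith) hSlb
    have hπle : πb l (pfun l) ≤ (1 + mt / 2)⁻¹ := by
      rw [hπ l (pfun l) hGp]
      exact inv_anti₀ (by linarith) hSlb
    rw [hR]
    apply mul_le_mul_of_nonneg_left _ hp0
    linarith
  have hp' : Tendsto (fun l => pfun l * (1 - (1 + mt / 2)⁻¹)) atTop atTop :=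
    hp.atTop_mul_const hc
  exact tendsto_atTop_mono' _ hev hp'
end

section
/- Existence and uniqueness of the optimal revenue rate: define g_{K−1}(θ) = θ/(K·μ) and, recursively for i = K−1, …, 1, g_{i−1}(θ) = (θ − λ·m(g_i(θ)))/(i·μ). Then the fixed point equation θ = λ·m(g_0(θ)) has exactly one solution θ* in ℝ, and θ* ≥ 0. -/
/-- Existence and uniqueness of the optimal revenue rate: with
`g_{K−1}(θ) = θ/(K·μ)` and `g_{i−1}(θ) = (θ − λ·m(g_i(θ)))/(i·μ)` for
`i = K−1, …, 1`, the fixed point equation `θ = λ·m(g_0(θ))` has exactly one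
solution in `ℝ`, and that solution is nonnegative. -/
theorem stmt_15
    (G : ℝ → ℝ) (hG0 : ∀ u, 0 ≤ G u) (hG1 : ∀ u, G u ≤ 1) (hGanti : Antitone G)
    (m : ℝ → ℝ)
    (hm : ∀ B : ℝ, IsLUB ((fun u => (u - B) * G u) '' Set.Ici (0 : ℝ)) (m B))
    (lam μ : ℝ) (hlam : 0 < lam) (hμ : 0 < μ)
    (K : ℕ) (hK : 1 ≤ K)
    (g : ℕ → ℝ → ℝ)
    (hgtop : ∀ θ : ℝ, g (K - 1) θ = θ / (K * μ))
    (hgrec : ∀ i : ℕ, 1 ≤ i → i + 1 ≤ K →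
      ∀ θ : ℝ, g (i - 1) θ = (θ - lam * m (g i θ)) / (i * μ)) :
    (∃! θ : ℝ, θ = lam * m (g 0 θ)) ∧
    (∀ θ : ℝ, θ = lam * m (g 0 θ) → 0 ≤ θ) := by
  -- basic facts about m
  have hub : ∀ B u, 0 ≤ u → (u - B) * G u ≤ m B := by
    intro B u hu
    exact (hm B).1 ⟨u, hu, rfl⟩
  have hm0 : ∀ B, 0 ≤ m B := by
    intro B
    have h := hub B (max B 0) (le_max_right _ _)
    nlinarith [hG0 (max B 0), le_max_left B 0]
  have hmanti : Antitone m := by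
    intro C B hCB
    apply (hm B).2
    rintro x ⟨u, hu, rfl⟩
    have h := hub C u hu
    show (u - B) * G u ≤ m C
    nlinarith [hG0 u]
  have hmlip : ∀ B C, C ≤ B → m C ≤ m B + (B - C) := by
    intro B C h
    apply (hm C).2
    rintro x ⟨u, hu, rfl⟩
    have h2 := hub B u hu
    show (u - C) * G u ≤ m B + (B - C)
    nlinarith [hG1 u, hG0 u]
  have hmcont : Continuous m := by
    have key : ∀ x y : ℝ, x ≤ y → |m x - m y| ≤ |x - y| := by
      intro x y h
      have h1 := hmanti h
      have h2 := hmlip y x h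
      rw [abs_of_nonneg (by linarith), abs_of_nonpos (by linarith)]
      linarith
    have hlip : LipschitzWith 1 m := by
      apply LipschitzWith.of_dist_le_mul
      intro x y
      rw [Real.dist_eq, Real.dist_eq, NNReal.coe_one, one_mul]
      rcases le_total x y with h | h
      · exact key x y h
      · rw [abs_sub_comm (m x), abs_sub_comm x]
        exact key y x h
    exact hlip.continuous
  -- monotonicity and continuity of g i, by downward induction
  have main : ∀ d, d ≤ K - 1 →
      Monotone (g (K - 1 - d)) ∧ Continuous (g (K - 1 - d)) := by
    intro d
    induction d with
    | zero =>
      intro _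
      simp only [Nat.sub_zero]
      have hKμ : (0:ℝ) < (K:ℝ) * μ := by
        have : (0:ℝ) < (K:ℝ) := by exact_mod_cast hK
        positivity
      constructor
      · intro a b hab
        rw [hgtop, hgtop]
        exact div_le_div_of_nonneg_right hab hKμ.le
      · have h : Continuous fun θ : ℝ => θ / ((K:ℝ) * μ) :=
          continuous_id.div_const _
        exact h.congr fun θ => (hgtop θ).symm
    | succ d ih =>
      intro hd
      have hd' : d ≤ K - 1 := Nat.le_of_succ_le hd
      obtain ⟨hmono, hcont⟩ := ih hd'
      set i := K - 1 - d with hi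
      have hi1 : 1 ≤ i := by omega
      have hi2 : i + 1 ≤ K := by omega
      have heq := hgrec i hi1 hi2
      have hidx : K - 1 - (d + 1) = i - 1 := by omega
      rw [hidx]
      have hipos : (0:ℝ) < (i:ℝ) * μ := by
        have : (0:ℝ) < (i:ℝ) := by exact_mod_cast hi1
        positivity
      constructor
      · intro a b hab
        rw [heq a, heq b]
        have hmm : m (g i b) ≤ m (g i a) := hmanti (hmono hab)
        have : a - lam * m (g i a) ≤ b - lam * m (g i b) := by nlinarith
        exact div_le_div_of_nonneg_right this hipos.le
      · have h : Continuous fun θ : ℝ => (θ - lam * m (g i θ)) / ((i:ℝ) * μ) :=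
          (continuous_id.sub (continuous_const.mul (hmcont.comp hcont))).div_const _
        exact h.congr fun θ => (heq θ).symm
  have hzero : K - 1 - (K - 1) = 0 := Nat.sub_self _
  obtain ⟨hmono0, hcont0⟩ := main (K - 1) le_rfl
  rw [hzero] at hmono0 hcont0
  -- the function H θ = θ - lam * m (g 0 θ)
  set H : ℝ → ℝ := fun θ => θ - lam * m (g 0 θ) with hH
  have hHcont : Continuous H :=
    continuous_id.sub (continuous_const.mul (hmcont.comp hcont0))
  have hHsm : StrictMono H := by
    intro a b hab
    have hmm : m (g 0 b) ≤ m (g 0 a) := hmanti (hmono0 hab.le)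
    simp only [hH]
    nlinarith
  set b : ℝ := lam * m (g 0 0) with hb
  have hb0 : 0 ≤ b := mul_nonneg hlam.le (hm0 _)
  have hH0 : H 0 ≤ 0 := by simp only [hH, hb]; linarith
  have hHb : 0 ≤ H b := by
    have hmm : m (g 0 b) ≤ m (g 0 0) := hmanti (hmono0 hb0)
    simp only [hH]
    nlinarith
  obtain ⟨θ, hθmem, hθ⟩ := intermediate_value_Icc hb0 hHcont.continuousOn
    (Set.mem_Icc.mpr ⟨hH0, hHb⟩)
  have hfix : θ = lam * m (g 0 θ) := by
    have : H θ = 0 := hθ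
    simp only [hH] at this
    linarith
  refine ⟨⟨θ, hfix, ?_⟩, ?_⟩
  · intro y hy
    have hy' : H y = 0 := by simp only [hH]; linarith
    have hθ' : H θ = 0 := by simp only [hH]; linarith
    exact hHsm.injective (by rw [hy', hθ'])
  · intro θ' hθ'
    rw [hθ']
    exact mul_nonneg hlam.le (hm0 _)
end

section
/- Dependence of the optimal revenue rate on the arrival rate: fix μ > 0 and K ≥ 1, and for each λ > 0 let θ*(λ) be the unique solution of θ = λ·m(g_0^λ(θ)), where g_{K−1}^λ(θ) = θ/(K·μ) and g_{i−1}^λ(θ) = (θ − λ·m(g_i^λ(θ)))/(i·μ) for i = K−1, …, 1. Then (a) λ ↦ θ*(λ) is nondecreasing in λ, and (b) λ ↦ θ*(λ)/λ is nonincreasing in λ. -/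
/-!
For a fixed rate `λ`, the map `θ ↦ g₀^λ(θ)` is monotone, so `θ ↦ λ·m(g₀^λ(θ)) - θ` is
strictly decreasing and the fixed point `θ*(λ)` lies below every supersolution
`θ ≥ λ·m(g₀^λ(θ))`. Both claims follow by exhibiting a supersolution:

* `θ*(λ₂)` is a supersolution at rate `λ₁ ≤ λ₂`, since lowering the rate raises every `g_i`;
* `λ₂·θ*(λ₁)/λ₁` is a supersolution at rate `λ₂`, by comparing `g^{λ₁}(θ*(λ₁))` with
  `g^{λ₂}(λ₂·θ*(λ₁)/λ₁)` after rescaling by the rates. This comparison needs the costs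
  `g_i^{λ₁}(θ*(λ₁))` to be nonnegative, which follows from a minimum principle.
-/

lemma isLUB_revenue_nonneg {G m : ℝ → ℝ} (hG0 : ∀ u, 0 ≤ G u)
    (hm : ∀ B : ℝ, IsLUB ((fun u => (u - B) * G u) '' Set.Ici (0 : ℝ)) (m B)) (B : ℝ) :
    0 ≤ m B :=
  le_trans (mul_nonneg (by simp) (hG0 _))
    ((hm B).1 ⟨max B 0, Set.mem_Ici.mpr (le_max_right _ _), rfl⟩)

lemma isLUB_revenue_antitone {G m : ℝ → ℝ} (hG0 : ∀ u, 0 ≤ G u)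
    (hm : ∀ B : ℝ, IsLUB ((fun u => (u - B) * G u) '' Set.Ici (0 : ℝ)) (m B)) :
    Antitone m := by
  intro B B' hBB'
  refine (hm B').2 ?_
  rintro _ ⟨u, hu, rfl⟩
  exact le_trans (mul_le_mul_of_nonneg_right (by linarith) (hG0 u)) ((hm B).1 ⟨u, hu, rfl⟩)

/-- `x i` plays the role of `g_i^λ(θ)` for `i ≤ K - 1`; the recursion is indexed by `i + 1`
to avoid truncated subtraction. -/
structure IsCostRecursion (m : ℝ → ℝ) (μ : ℝ) (K : ℕ) (lam θ : ℝ) (x : ℕ → ℝ) : Prop where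
  top : x (K - 1) = θ / (K * μ)
  step : ∀ i, i + 2 ≤ K → x i = (θ - lam * m (x (i + 1))) / ((i + 1) * μ)

namespace IsCostRecursion

variable {m : ℝ → ℝ} {μ : ℝ} {K : ℕ} {lam lam' θ θ' : ℝ} {x y : ℕ → ℝ}

lemma le_of_load_le_of_rate_ge (hm0 : ∀ B, 0 ≤ m B) (hmanti : Antitone m) (hμ : 0 ≤ μ)
    (hx : IsCostRecursion m μ K lam θ x) (hy : IsCostRecursion m μ K lam' θ' y)
    (hlam' : 0 ≤ lam') (hlam : lam' ≤ lam) (hθ : θ ≤ θ') {i : ℕ} (hi : i ≤ K - 1) :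
    x i ≤ y i := by
  induction hi using Nat.decreasingInduction with
  | self =>
    rw [hx.top, hy.top]
    exact div_le_div_of_nonneg_right hθ (by positivity)
  | of_succ i hi ih =>
    rw [hx.step i (by omega), hy.step i (by omega)]
    refine div_le_div_of_nonneg_right ?_ (by positivity)
    have hmy : m (y (i + 1)) ≤ m (x (i + 1)) := hmanti ih
    nlinarith [mul_le_mul_of_nonneg_left hmy hlam',
      mul_le_mul_of_nonneg_right hlam (hm0 (x (i + 1)))]

/-- A minimum principle: at a minimal index `j < K - 1`, comparing the recursion at `j` and
at `j - 1` (or the fixed-point equation when `j = 0`) gives `(j + 1) μ x_j ≥ j μ x_j`. -/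
lemma nonneg_of_fixedPoint (hm0 : ∀ B, 0 ≤ m B) (hmanti : Antitone m) (hμ : 0 < μ)
    (hlam : 0 ≤ lam) (hx : IsCostRecursion m μ K lam θ x) (hfix : θ = lam * m (x 0))
    {i : ℕ} (hi : i ≤ K - 1) : 0 ≤ x i := by
  obtain ⟨j, hj, hmin⟩ := (Finset.Iic (K - 1)).exists_min_image x ⟨0, by simp⟩
  simp only [Finset.mem_Iic] at hj hmin
  refine le_trans ?_ (hmin i hi)
  have hθ0 : 0 ≤ θ := hfix ▸ mul_nonneg hlam (hm0 _)
  rcases eq_or_lt_of_le hj with rfl | hjK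
  · rw [hx.top]
    positivity
  have hstep : x j * ((j + 1) * μ) = θ - lam * m (x (j + 1)) := by
    rw [hx.step j (by omega)]
    field_simp
  have hm_next : m (x (j + 1)) ≤ m (x j) := hmanti (hmin _ (by omega))
  have hprev : (j : ℝ) * μ * x j ≤ θ - lam * m (x j) := by
    rcases j with _ | j
    · simp [← hfix]
    · have hrec : x j * ((j + 1) * μ) = θ - lam * m (x (j + 1)) := by
        rw [hx.step j (by omega)]
        field_simp
      have := mul_le_mul_of_nonneg_left (hmin j (by omega))
        (by positivity : 0 ≤ ((j : ℝ) + 1) * μ)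
      push_cast
      linarith
  nlinarith [mul_le_mul_of_nonneg_left hm_next hlam]

lemma le_of_rate_le_of_mul_eq (hmanti : Antitone m) (hμ : 0 ≤ μ)
    (hx : IsCostRecursion m μ K lam θ x) (hy : IsCostRecursion m μ K lam' θ' y)
    (hlam : 0 < lam) (hlam' : lam ≤ lam') (hθ : lam' * θ = lam * θ')
    (hx0 : ∀ i ≤ K - 1, 0 ≤ x i) {i : ℕ} (hi : i ≤ K - 1) : x i ≤ y i := by
  suffices h : lam' * x i ≤ lam * y i by
    nlinarith [mul_le_mul_of_nonneg_right hlam' (hx0 i hi)]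
  induction hi using Nat.decreasingInduction with
  | self =>
    rw [hx.top, hy.top, mul_div_assoc', mul_div_assoc', hθ]
  | of_succ i hi ih =>
    have hxy : x (i + 1) ≤ y (i + 1) := by
      nlinarith [mul_le_mul_of_nonneg_right hlam' (hx0 (i + 1) hi)]
    have hmy : m (y (i + 1)) ≤ m (x (i + 1)) := hmanti hxy
    rw [hx.step i (by omega), hy.step i (by omega), mul_div_assoc', mul_div_assoc']
    refine div_le_div_of_nonneg_right ?_ (by positivity)
    nlinarith [mul_le_mul_of_nonneg_left hmy (mul_nonneg hlam.le (hlam.le.trans hlam'))]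

lemma fixedPoint_le (hm0 : ∀ B, 0 ≤ m B) (hmanti : Antitone m) (hμ : 0 ≤ μ)
    (hlam : 0 ≤ lam)
    (hx : IsCostRecursion m μ K lam θ x) (hfix : θ = lam * m (x 0))
    (hy : IsCostRecursion m μ K lam θ' y) (hsuper : lam * m (y 0) ≤ θ') : θ ≤ θ' := by
  by_contra! hlt
  have : m (x 0) ≤ m (y 0) :=
    hmanti (hy.le_of_load_le_of_rate_ge hm0 hmanti hμ hx hlam le_rfl hlt.le (Nat.zero_le _))
  nlinarith [mul_le_mul_of_nonneg_left this hlam]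

end IsCostRecursion

theorem stmt_16_general
    (G : ℝ → ℝ) (hG0 : ∀ u, 0 ≤ G u)
    (m : ℝ → ℝ)
    (hm : ∀ B : ℝ, IsLUB ((fun u => (u - B) * G u) '' Set.Ici (0 : ℝ)) (m B))
    (μ : ℝ) (hμ : 0 < μ)
    (K : ℕ)
    (g : ℝ → ℕ → ℝ → ℝ)
    (hgtop : ∀ lam : ℝ, 0 < lam → ∀ θ : ℝ, g lam (K - 1) θ = θ / (K * μ))
    (hgrec : ∀ lam : ℝ, 0 < lam → ∀ i : ℕ, 1 ≤ i → i + 1 ≤ K →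
      ∀ θ : ℝ, g lam (i - 1) θ = (θ - lam * m (g lam i θ)) / (i * μ))
    (θstar : ℝ → ℝ)
    (hθ : ∀ lam : ℝ, 0 < lam → θstar lam = lam * m (g lam 0 (θstar lam))) :
    (∀ lam₁ lam₂ : ℝ, 0 < lam₁ → lam₁ ≤ lam₂ → θstar lam₁ ≤ θstar lam₂) ∧
    (∀ lam₁ lam₂ : ℝ, 0 < lam₁ → lam₁ ≤ lam₂ →
      θstar lam₂ / lam₂ ≤ θstar lam₁ / lam₁) := by
  have hm0 := isLUB_revenue_nonneg hG0 hm
  have hmanti := isLUB_revenue_antitone hG0 hm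
  have hg (lam : ℝ) (hlam : 0 < lam) (θ : ℝ) :
      IsCostRecursion m μ K lam θ (fun i => g lam i θ) :=
    ⟨hgtop lam hlam θ, fun i hi => by
      simpa using hgrec lam hlam (i + 1) (by omega) (by omega) θ⟩
  refine ⟨fun l₁ l₂ h₁ h₁₂ => ?_, fun l₁ l₂ h₁ h₁₂ => ?_⟩
  all_goals have h₂ := h₁.trans_le h₁₂
  · refine (hg l₁ h₁ _).fixedPoint_le hm0 hmanti hμ.le h₁.le (hθ l₁ h₁)
      (hg l₁ h₁ (θstar l₂)) ?_
    have hle : g l₂ 0 (θstar l₂) ≤ g l₁ 0 (θstar l₂) :=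
      (hg l₂ h₂ _).le_of_load_le_of_rate_ge hm0 hmanti hμ.le (hg l₁ h₁ _) h₁.le h₁₂ le_rfl
        (Nat.zero_le _)
    calc l₁ * m (g l₁ 0 (θstar l₂)) ≤ l₂ * m (g l₂ 0 (θstar l₂)) :=
          mul_le_mul h₁₂ (hmanti hle) (hm0 _) h₂.le
      _ = θstar l₂ := (hθ l₂ h₂).symm
  · set θ := l₂ * (θstar l₁ / l₁)
    have hle : g l₁ 0 (θstar l₁) ≤ g l₂ 0 θ :=
      (hg l₁ h₁ _).le_of_rate_le_of_mul_eq hmanti hμ.le (hg l₂ h₂ θ) h₁ h₁₂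
        (by simp only [θ]; field_simp)
        (fun i hi => (hg l₁ h₁ _).nonneg_of_fixedPoint hm0 hmanti hμ h₁.le (hθ l₁ h₁) hi)
        (Nat.zero_le _)
    have hsuper : l₂ * m (g l₂ 0 θ) ≤ θ := by
      refine mul_le_mul_of_nonneg_left ((hmanti hle).trans_eq ?_) h₂.le
      rw [eq_div_iff h₁.ne', mul_comm, ← hθ l₁ h₁]
    rw [div_le_iff₀' h₂]
    exact (hg l₂ h₂ _).fixedPoint_le hm0 hmanti hμ.le h₂.le (hθ l₂ h₂) (hg l₂ h₂ θ) hsuper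

/-- Dependence of the optimal revenue rate on the arrival rate:
fixing `μ > 0` and `K ≥ 1`, with `g_{K−1}^λ(θ) = θ/(K·μ)` and
`g_{i−1}^λ(θ) = (θ − λ·m(g_i^λ(θ)))/(i·μ)`, and `θ*(λ)` the (unique) solution
of `θ = λ·m(g_0^λ(θ))`, (a) `λ ↦ θ*(λ)` is nondecreasing and
(b) `λ ↦ θ*(λ)/λ` is nonincreasing on `λ > 0`. -/
theorem stmt_16
    (G : ℝ → ℝ) (hG0 : ∀ u, 0 ≤ G u) (hG1 : ∀ u, G u ≤ 1) (hGanti : Antitone G)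
    (m : ℝ → ℝ)
    (hm : ∀ B : ℝ, IsLUB ((fun u => (u - B) * G u) '' Set.Ici (0 : ℝ)) (m B))
    (μ : ℝ) (hμ : 0 < μ)
    (K : ℕ) (hK : 1 ≤ K)
    (g : ℝ → ℕ → ℝ → ℝ)
    (hgtop : ∀ lam : ℝ, 0 < lam → ∀ θ : ℝ, g lam (K - 1) θ = θ / (K * μ))
    (hgrec : ∀ lam : ℝ, 0 < lam → ∀ i : ℕ, 1 ≤ i → i + 1 ≤ K →
      ∀ θ : ℝ, g lam (i - 1) θ = (θ - lam * m (g lam i θ)) / (i * μ))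
    (θstar : ℝ → ℝ)
    (hθ : ∀ lam : ℝ, 0 < lam → θstar lam = lam * m (g lam 0 (θstar lam))) :
    (∀ lam₁ lam₂ : ℝ, 0 < lam₁ → lam₁ ≤ lam₂ → θstar lam₁ ≤ θstar lam₂) ∧
    (∀ lam₁ lam₂ : ℝ, 0 < lam₁ → lam₁ ≤ lam₂ →
      θstar lam₂ / lam₂ ≤ θstar lam₁ / lam₁) :=
  stmt_16_general G hG0 m hm μ hμ K g hgtop hgrec θstar hθ
end

section
/- Dependence of the optimal revenue rate on the service rate: fix λ > 0 and K ≥ 1, and for each μ > 0 let θ*(μ) be the unique solution of θ = λ·m(g_0^μ(θ)), where g_{K−1}^μ(θ) = θ/(K·μ) and g_{i−1}^μ(θ) = (θ − λ·m(g_i^μ(θ)))/(i·μ) for i = K−1, …, 1. Then (a) μ ↦ θ*(μ) is nondecreasing in μ, and (b) μ ↦ θ*(μ)/μ is nonincreasing in μ. -/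
/-- Dependence of the optimal revenue rate on the service rate:
fixing `λ > 0` and `K ≥ 1`, with `g_{K−1}^μ(θ) = θ/(K·μ)` and
`g_{i−1}^μ(θ) = (θ − λ·m(g_i^μ(θ)))/(i·μ)`, and `θ*(μ)` the (unique) solution
of `θ = λ·m(g_0^μ(θ))`, (a) `μ ↦ θ*(μ)` is nondecreasing and
(b) `μ ↦ θ*(μ)/μ` is nonincreasing on `μ > 0`. -/
theorem stmt_17
    (G : ℝ → ℝ) (hG0 : ∀ u, 0 ≤ G u) (hG1 : ∀ u, G u ≤ 1) (hGanti : Antitone G)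
    (m : ℝ → ℝ)
    (hm : ∀ B : ℝ, IsLUB ((fun u => (u - B) * G u) '' Set.Ici (0 : ℝ)) (m B))
    (lam : ℝ) (hlam : 0 < lam)
    (K : ℕ) (hK : 1 ≤ K)
    (g : ℝ → ℕ → ℝ → ℝ)
    (hgtop : ∀ μ : ℝ, 0 < μ → ∀ θ : ℝ, g μ (K - 1) θ = θ / (K * μ))
    (hgrec : ∀ μ : ℝ, 0 < μ → ∀ i : ℕ, 1 ≤ i → i + 1 ≤ K →
      ∀ θ : ℝ, g μ (i - 1) θ = (θ - lam * m (g μ i θ)) / (i * μ))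
    (θstar : ℝ → ℝ)
    (hθ : ∀ μ : ℝ, 0 < μ → θstar μ = lam * m (g μ 0 (θstar μ))) :
    (∀ μ₁ μ₂ : ℝ, 0 < μ₁ → μ₁ ≤ μ₂ → θstar μ₁ ≤ θstar μ₂) ∧
    (∀ μ₁ μ₂ : ℝ, 0 < μ₁ → μ₁ ≤ μ₂ → θstar μ₂ / μ₂ ≤ θstar μ₁ / μ₁) := by
  -- basic facts about m
  have hm0 : ∀ B : ℝ, 0 ≤ m B := by
    intro B
    have hmem : (max B 0 - B) * G (max B 0) ∈
        ((fun u => (u - B) * G u) '' Set.Ici (0 : ℝ)) :=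
      Set.mem_image_of_mem _ (le_max_right B 0)
    have h1 : (0:ℝ) ≤ (max B 0 - B) * G (max B 0) :=
      mul_nonneg (by simp [le_max_left]) (hG0 _)
    exact le_trans h1 ((hm B).1 hmem)
  have hmA : ∀ B₁ B₂ : ℝ, B₁ ≤ B₂ → m B₂ ≤ m B₁ := by
    intro B₁ B₂ h
    refine (hm B₂).2 ?_
    rintro x ⟨u, hu, rfl⟩
    calc (u - B₂) * G u ≤ (u - B₁) * G u :=
          mul_le_mul_of_nonneg_right (by linarith) (hG0 u)
      _ ≤ m B₁ := (hm B₁).1 ⟨u, hu, rfl⟩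
  have hK0 : (0:ℝ) < (K:ℝ) := by exact_mod_cast hK
  -- convenient recursion
  have hrec' : ∀ μ : ℝ, 0 < μ → ∀ i : ℕ, i + 2 ≤ K → ∀ θ : ℝ,
      g μ i θ = (θ - lam * m (g μ (i+1) θ)) / (((i:ℝ)+1) * μ) := by
    intro μ hμ i hi θ
    have h := hgrec μ hμ (i+1) (by omega) (by omega) θ
    simpa using h
  -- monotonicity in θ
  have mono : ∀ μ : ℝ, 0 < μ → ∀ d : ℕ, ∀ i : ℕ, i + d = K - 1 →
      ∀ θ θ' : ℝ, θ ≤ θ' → g μ i θ ≤ g μ i θ' := by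
    intro μ hμ d
    induction d with
    | zero =>
      intro i hi θ θ' hθθ
      have hieq : i = K - 1 := by omega
      subst hieq
      rw [hgtop μ hμ, hgtop μ hμ]
      have hKμ : 0 < (K:ℝ) * μ := mul_pos hK0 hμ
      exact div_le_div_of_nonneg_right hθθ hKμ.le
    | succ d ih =>
      intro i hi θ θ' hθθ
      have hi1 : (i+1) + d = K - 1 := by omega
      have hiK : i + 2 ≤ K := by omega
      have hmle : m (g μ (i+1) θ') ≤ m (g μ (i+1) θ) :=
        hmA _ _ (ih (i+1) hi1 θ θ' hθθ)
      rw [hrec' μ hμ i hiK θ, hrec' μ hμ i hiK θ']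
      have hc : 0 < ((i:ℝ)+1) * μ := by positivity
      have hnum : θ - lam * m (g μ (i+1) θ) ≤ θ' - lam * m (g μ (i+1) θ') := by
        nlinarith [mul_le_mul_of_nonneg_left hmle hlam.le]
      exact div_le_div_of_nonneg_right hnum hc.le
  -- θstar is nonnegative
  have hθ0 : ∀ μ : ℝ, 0 < μ → 0 ≤ θstar μ := by
    intro μ hμ
    rw [hθ μ hμ]
    exact mul_nonneg hlam.le (hm0 _)
  -- fixed point comparison helpers
  have fp_le : ∀ μ : ℝ, 0 < μ → ∀ t : ℝ, lam * m (g μ 0 t) ≤ t → θstar μ ≤ t := by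
    intro μ hμ t ht
    by_contra hcon
    push_neg at hcon
    have h1 : g μ 0 t ≤ g μ 0 (θstar μ) :=
      mono μ hμ (K-1) 0 (by omega) t (θstar μ) hcon.le
    have h2 : m (g μ 0 (θstar μ)) ≤ m (g μ 0 t) := hmA _ _ h1
    have : θstar μ ≤ t := by
      rw [hθ μ hμ]
      calc lam * m (g μ 0 (θstar μ)) ≤ lam * m (g μ 0 t) :=
            mul_le_mul_of_nonneg_left h2 hlam.le
        _ ≤ t := ht
    linarith
  have fp_ge : ∀ μ : ℝ, 0 < μ → ∀ t : ℝ, t ≤ lam * m (g μ 0 t) → t ≤ θstar μ := by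
    intro μ hμ t ht
    by_contra hcon
    push_neg at hcon
    have h1 : g μ 0 (θstar μ) ≤ g μ 0 t :=
      mono μ hμ (K-1) 0 (by omega) (θstar μ) t hcon.le
    have h2 : m (g μ 0 t) ≤ m (g μ 0 (θstar μ)) := hmA _ _ h1
    have : t ≤ θstar μ := by
      calc t ≤ lam * m (g μ 0 t) := ht
        _ ≤ lam * m (g μ 0 (θstar μ)) := mul_le_mul_of_nonneg_left h2 hlam.le
        _ = θstar μ := (hθ μ hμ).symm
    linarith
  -- scaling comparison: g μ₁ i (θ·(μ₁/μ₂)) ≤ g μ₂ i θ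
  have scale : ∀ μ₁ μ₂ : ℝ, 0 < μ₁ → μ₁ ≤ μ₂ → ∀ d i : ℕ, i + d = K - 1 →
      ∀ θ : ℝ, g μ₁ i (θ * (μ₁ / μ₂)) ≤ g μ₂ i θ := by
    intro μ₁ μ₂ hμ₁ h12 d
    have hμ₂ : 0 < μ₂ := lt_of_lt_of_le hμ₁ h12
    induction d with
    | zero =>
      intro i hi θ
      have hieq : i = K - 1 := by omega
      subst hieq
      rw [hgtop μ₁ hμ₁, hgtop μ₂ hμ₂]
      have hμ₁' : μ₁ ≠ 0 := ne_of_gt hμ₁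
      have hμ₂' : μ₂ ≠ 0 := ne_of_gt hμ₂
      have hK' : (K:ℝ) ≠ 0 := ne_of_gt hK0
      have heq : θ * (μ₁ / μ₂) / (↑K * μ₁) = θ / (↑K * μ₂) := by
        field_simp
      exact le_of_eq heq
    | succ d ih =>
      intro i hi θ
      have hi1 : (i+1) + d = K - 1 := by omega
      have hiK : i + 2 ≤ K := by omega
      have hIH : g μ₁ (i+1) (θ * (μ₁ / μ₂)) ≤ g μ₂ (i+1) θ := ih (i+1) hi1 θ
      have hmle : m (g μ₂ (i+1) θ) ≤ m (g μ₁ (i+1) (θ * (μ₁ / μ₂))) := hmA _ _ hIH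
      have hm2 : 0 ≤ m (g μ₂ (i+1) θ) := hm0 _
      rw [hrec' μ₁ hμ₁ i hiK, hrec' μ₂ hμ₂ i hiK]
      have hc : (0:ℝ) < (i:ℝ)+1 := by positivity
      rw [div_le_div_iff₀ (mul_pos hc hμ₁) (mul_pos hc hμ₂)]
      have hθμ : θ * (μ₁ / μ₂) * μ₂ = θ * μ₁ := by field_simp
      nlinarith [mul_le_mul_of_nonneg_left hmle (mul_nonneg hlam.le hμ₁.le),
        mul_le_mul_of_nonneg_left (mul_le_mul_of_nonneg_left hm2 hlam.le) (sub_nonneg.mpr h12),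
        mul_pos hc hμ₁, mul_pos hc hμ₂]
  -- key downward-induction bound at the fixed point
  have keyX : ∀ μ : ℝ, 0 < μ → ∀ d i : ℕ, i + d = K - 1 →
      g μ i (θstar μ) < 0 →
      θstar μ - lam * m (g μ i (θstar μ)) ≤ ((i:ℝ)+1) * μ * g μ i (θstar μ) := by
    intro μ hμ d
    induction d with
    | zero =>
      intro i hi hneg
      exfalso
      have hieq : i = K - 1 := by omega
      subst hieq
      rw [hgtop μ hμ] at hneg
      have : 0 ≤ θstar μ / (↑K * μ) := div_nonneg (hθ0 μ hμ) (mul_pos hK0 hμ).le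
      linarith
    | succ d ih =>
      intro i hi hneg
      have hi1 : (i+1) + d = K - 1 := by omega
      have hiK : i + 2 ≤ K := by omega
      have hreci := hrec' μ hμ i hiK (θstar μ)
      have hc : (0:ℝ) < ((i:ℝ)+1) * μ := by positivity
      -- g μ i θ* ≤ g μ (i+1) θ*
      have hle : g μ i (θstar μ) ≤ g μ (i+1) (θstar μ) := by
        rcases lt_or_ge (g μ (i+1) (θstar μ)) 0 with hneg1 | hpos1
        · have hIH := ih (i+1) hi1 hneg1
          have h1 : θstar μ - lam * m (g μ (i+1) (θstar μ)) ≤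
              ((i:ℝ)+1) * μ * g μ (i+1) (θstar μ) := by
            push_cast at hIH
            nlinarith [mul_pos hμ (neg_pos.mpr hneg1)]
          have h2 : g μ i (θstar μ) ≤
              (((i:ℝ)+1) * μ * g μ (i+1) (θstar μ)) / (((i:ℝ)+1) * μ) := by
            rw [hreci]
            exact div_le_div_of_nonneg_right h1 hc.le
          rwa [mul_div_cancel_left₀ _ (ne_of_gt hc)] at h2
        · linarith
      have hmle : m (g μ (i+1) (θstar μ)) ≤ m (g μ i (θstar μ)) := hmA _ _ hle
      have hnum : θstar μ - lam * m (g μ (i+1) (θstar μ)) =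
          ((i:ℝ)+1) * μ * g μ i (θstar μ) := by
        rw [hreci, mul_div_cancel₀ _ (ne_of_gt hc)]
      have hlast : ((i:ℝ)+1) * μ * g μ i (θstar μ) ≤ (((i:ℝ)+1)) * μ * g μ i (θstar μ) := le_refl _
      nlinarith [mul_le_mul_of_nonneg_left hmle hlam.le]
  -- nonnegativity of all g's at the fixed point
  have gnonneg : ∀ μ : ℝ, 0 < μ → ∀ i : ℕ, i ≤ K - 1 → 0 ≤ g μ i (θstar μ) := by
    intro μ hμ
    -- negativity propagates down to index 0
    have prop : ∀ i : ℕ, i ≤ K - 1 → g μ i (θstar μ) < 0 → g μ 0 (θstar μ) < 0 := by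
      intro i
      induction i with
      | zero => exact fun _ h => h
      | succ i ih =>
        intro hi hneg
        have hX := keyX μ hμ (K - 1 - (i+1)) (i+1) (by omega) hneg
        have hc : (0:ℝ) < ((i:ℝ)+1+1) * μ := by positivity
        have h1 : θstar μ - lam * m (g μ (i+1) (θstar μ)) < 0 := by
          push_cast at hX
          nlinarith [mul_pos hc (neg_pos.mpr hneg)]
        have hreci := hrec' μ hμ i (by omega) (θstar μ)
        have hgi : g μ i (θstar μ) < 0 := by
          rw [hreci]
          exact div_neg_of_neg_of_pos h1 (by positivity)
        exact ih (by omega) hgi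
    -- g at 0 is nonnegative
    have hg0 : 0 ≤ g μ 0 (θstar μ) := by
      by_contra hcon
      push_neg at hcon
      have hX := keyX μ hμ (K - 1) 0 (by omega) hcon
      have heq0 : θstar μ - lam * m (g μ 0 (θstar μ)) = 0 := by
        have h := hθ μ hμ
        linarith
      push_cast at hX
      nlinarith [hμ, hcon]
    intro i hi
    by_contra hcon
    push_neg at hcon
    exact absurd (prop i hi hcon) (not_lt.mpr hg0)
  constructor
  · -- (a) θstar nondecreasing
    intro μ₁ μ₂ hμ₁ h12
    have hμ₂ : 0 < μ₂ := lt_of_lt_of_le hμ₁ h12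
    by_contra hcon
    push_neg at hcon
    set θ₁ := θstar μ₁ with hθ₁def
    set θ₂ := θstar μ₂ with hθ₂def
    -- numerators of the μ₂-system at θ₁ are nonnegative
    have hnum2 : ∀ i : ℕ, 1 ≤ i → i ≤ K - 1 → lam * m (g μ₂ i θ₁) ≤ θ₁ := by
      intro i h1i hiK
      have hg : 0 ≤ g μ₂ (i-1) θ₂ := gnonneg μ₂ hμ₂ (i-1) (by omega)
      have hreci := hgrec μ₂ hμ₂ i h1i (by omega) θ₂
      rw [hreci] at hg
      have hipos : (0:ℝ) < (i:ℝ) * μ₂ := by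
        have : (0:ℝ) < (i:ℝ) := by exact_mod_cast h1i
        positivity
      have hN : 0 ≤ θ₂ - lam * m (g μ₂ i θ₂) := by
        rcases div_nonneg_iff.mp hg with ⟨h, _⟩ | ⟨_, h⟩
        · exact h
        · linarith
      have hmono : g μ₂ i θ₂ ≤ g μ₂ i θ₁ :=
        mono μ₂ hμ₂ (K - 1 - i) i (by omega) θ₂ θ₁ hcon.le
      have : m (g μ₂ i θ₁) ≤ m (g μ₂ i θ₂) := hmA _ _ hmono
      have h3 : lam * m (g μ₂ i θ₁) ≤ lam * m (g μ₂ i θ₂) :=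
        mul_le_mul_of_nonneg_left this hlam.le
      linarith
    -- downward comparison: g μ₂ i θ₁ ≤ g μ₁ i θ₁
    have comp : ∀ d i : ℕ, i + d = K - 1 → g μ₂ i θ₁ ≤ g μ₁ i θ₁ := by
      intro d
      induction d with
      | zero =>
        intro i hi
        have hieq : i = K - 1 := by omega
        subst hieq
        rw [hgtop μ₁ hμ₁, hgtop μ₂ hμ₂]
        have h1 : (0:ℝ) < (K:ℝ) * μ₁ := mul_pos hK0 hμ₁
        have h2 : (K:ℝ) * μ₁ ≤ (K:ℝ) * μ₂ := by nlinarith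
        exact div_le_div₀ (hθ0 μ₁ hμ₁) (le_refl θ₁) h1 h2
      | succ d ih =>
        intro i hi
        have hIH : g μ₂ (i+1) θ₁ ≤ g μ₁ (i+1) θ₁ := ih (i+1) (by omega)
        have hiK : i + 2 ≤ K := by omega
        rw [hrec' μ₁ hμ₁ i hiK, hrec' μ₂ hμ₂ i hiK]
        have hN2 : 0 ≤ θ₁ - lam * m (g μ₂ (i+1) θ₁) := by
          have := hnum2 (i+1) (by omega) (by omega)
          linarith
        have hmle : m (g μ₁ (i+1) θ₁) ≤ m (g μ₂ (i+1) θ₁) := hmA _ _ hIH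
        have hN12 : θ₁ - lam * m (g μ₂ (i+1) θ₁) ≤ θ₁ - lam * m (g μ₁ (i+1) θ₁) := by
          nlinarith [mul_le_mul_of_nonneg_left hmle hlam.le]
        have hc1 : (0:ℝ) < ((i:ℝ)+1) * μ₁ := by positivity
        have hc12 : ((i:ℝ)+1) * μ₁ ≤ ((i:ℝ)+1) * μ₂ := by nlinarith [hc1]
        exact div_le_div₀ (hN2.trans hN12) hN12 hc1 hc12
    have hfinal : θ₁ ≤ lam * m (g μ₂ 0 θ₁) := by
      have h1 : g μ₂ 0 θ₁ ≤ g μ₁ 0 θ₁ := comp (K-1) 0 (by omega)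
      have h2 : m (g μ₁ 0 θ₁) ≤ m (g μ₂ 0 θ₁) := hmA _ _ h1
      calc θ₁ = lam * m (g μ₁ 0 θ₁) := hθ μ₁ hμ₁
        _ ≤ lam * m (g μ₂ 0 θ₁) := mul_le_mul_of_nonneg_left h2 hlam.le
    have : θ₁ ≤ θ₂ := fp_ge μ₂ hμ₂ θ₁ hfinal
    linarith
  · -- (b) θstar/μ nonincreasing
    intro μ₁ μ₂ hμ₁ h12
    have hμ₂ : 0 < μ₂ := lt_of_lt_of_le hμ₁ h12
    set θ₁ := θstar μ₁ with hθ₁def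
    set t := θ₁ * (μ₂ / μ₁) with htdef
    have htr : t * (μ₁ / μ₂) = θ₁ := by
      rw [htdef]
      field_simp
    have hs : g μ₁ 0 (t * (μ₁ / μ₂)) ≤ g μ₂ 0 t := scale μ₁ μ₂ hμ₁ h12 (K-1) 0 (by omega) t
    rw [htr] at hs
    have h2 : m (g μ₂ 0 t) ≤ m (g μ₁ 0 θ₁) := hmA _ _ hs
    have hθ1t : θ₁ ≤ t := by
      have : (1:ℝ) ≤ μ₂ / μ₁ := (one_le_div hμ₁).mpr h12
      nlinarith [hθ0 μ₁ hμ₁]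
    have hft : lam * m (g μ₂ 0 t) ≤ t :=
      calc lam * m (g μ₂ 0 t) ≤ lam * m (g μ₁ 0 θ₁) := mul_le_mul_of_nonneg_left h2 hlam.le
        _ = θ₁ := (hθ μ₁ hμ₁).symm
        _ ≤ t := hθ1t
    have hle : θstar μ₂ ≤ t := fp_le μ₂ hμ₂ t hft
    rw [div_le_div_iff₀ hμ₂ hμ₁]
    have hteq : t * μ₁ = θ₁ * μ₂ := by
      rw [htdef]
      field_simp
    nlinarith [hle, hμ₁]
end

section
/- Dependence of the optimal revenue rate on the number of servers: fix λ > 0 and μ > 0, and for each K ≥ 1 let θ*(K) be the unique solution of θ = λ·m(g_0^K(θ)), where g_{K−1}^K(θ) = θ/(K·μ) and g_{i−1}^K(θ) = (θ − λ·m(g_i^K(θ)))/(i·μ) for i = K−1, …, 1. Then (a) K ↦ θ*(K) is nondecreasing in K; (b) K ↦ θ*(K)/K is nonincreasing in K; and (c) if for each B the maximizer u*(B) of u ↦ (u − B)·Ḡ(u) over u ≥ 0 is unique, then for every fixed state i the optimal price u*_i(K) = u*(g_i^K(θ*(K))) is nonincreasing in K (for K > i). -/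
private lemma aux_m_ub (G : ℝ → ℝ) (m : ℝ → ℝ)
    (hm : ∀ B : ℝ, IsGreatest ((fun u => (u - B) * G u) '' Set.Ici (0 : ℝ)) (m B)) :
    ∀ B u : ℝ, 0 ≤ u → (u - B) * G u ≤ m B := by
  intro B u hu
  exact (hm B).2 ⟨u, hu, rfl⟩

private lemma aux_m_nonneg (G : ℝ → ℝ) (hG0 : ∀ u, 0 ≤ G u) (m : ℝ → ℝ)
    (hm : ∀ B : ℝ, IsGreatest ((fun u => (u - B) * G u) '' Set.Ici (0 : ℝ)) (m B)) :
    ∀ B : ℝ, 0 ≤ m B := by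
  intro B
  have h1 := aux_m_ub G m hm B (max B 0) (le_max_right _ _)
  have h0 : 0 ≤ (max B 0 - B) * G (max B 0) :=
    mul_nonneg (by simp [le_max_left]) (hG0 _)
  linarith

private lemma aux_m_anti (G : ℝ → ℝ) (hG0 : ∀ u, 0 ≤ G u) (m : ℝ → ℝ)
    (hm : ∀ B : ℝ, IsGreatest ((fun u => (u - B) * G u) '' Set.Ici (0 : ℝ)) (m B)) :
    ∀ B B' : ℝ, B ≤ B' → m B' ≤ m B := by
  intro B B' hBB'
  obtain ⟨u, hu, hEq⟩ := (hm B').1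
  calc m B' = (u - B') * G u := hEq.symm
    _ ≤ (u - B) * G u := by have := hG0 u; nlinarith
    _ ≤ m B := aux_m_ub G m hm B u hu

private lemma aux_gmono (m : ℝ → ℝ) (lam μ : ℝ) (hlam : 0 < lam) (hμ : 0 < μ)
    (hmanti : ∀ B B' : ℝ, B ≤ B' → m B' ≤ m B)
    (g : ℕ → ℕ → ℝ → ℝ)
    (hgtop : ∀ K : ℕ, 1 ≤ K → ∀ θ : ℝ, g K (K - 1) θ = θ / (K * μ))
    (hgrec : ∀ K : ℕ, 1 ≤ K → ∀ i : ℕ, 1 ≤ i → i + 1 ≤ K →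
      ∀ θ : ℝ, g K (i - 1) θ = (θ - lam * m (g K i θ)) / (i * μ)) :
    ∀ K : ℕ, 1 ≤ K → ∀ l i : ℕ, i + 1 + l = K → ∀ θ θ' : ℝ, θ ≤ θ' →
      g K i θ ≤ g K i θ' := by
  intro K hK l
  induction l with
  | zero =>
    intro i hi θ θ' hθθ
    have hik : K - 1 = i := by omega
    rw [← hik, hgtop K hK θ, hgtop K hK θ']
    have hKpos : (0:ℝ) < (K:ℝ) := by exact_mod_cast Nat.lt_of_lt_of_le Nat.zero_lt_one hK
    have hpos : (0:ℝ) < (K:ℝ) * μ := mul_pos hKpos hμ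
    gcongr
  | succ l IH =>
    intro i hi θ θ' hθθ
    have e := hgrec K hK (i+1) (by omega) (by omega)
    simp only [Nat.add_sub_cancel] at e
    rw [e θ, e θ']
    have hg := IH (i+1) (by omega) θ θ' hθθ
    have hmm := hmanti _ _ hg
    have hipos : (0:ℝ) < ((i:ℝ)+1) * μ := by positivity
    have hipos' : (0:ℝ) < ((i+1 : ℕ):ℝ) * μ := by push_cast; exact hipos
    have hnum : θ - lam * m (g K (i+1) θ) ≤ θ' - lam * m (g K (i+1) θ') := by
      nlinarith
    gcongr


private lemma aux_crossK (m : ℝ → ℝ) (lam μ : ℝ) (hlam : 0 < lam) (hμ : 0 < μ)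
    (hmanti : ∀ B B' : ℝ, B ≤ B' → m B' ≤ m B) (hmnn : ∀ B : ℝ, 0 ≤ m B)
    (g : ℕ → ℕ → ℝ → ℝ)
    (hgtop : ∀ K : ℕ, 1 ≤ K → ∀ θ : ℝ, g K (K - 1) θ = θ / (K * μ))
    (hgrec : ∀ K : ℕ, 1 ≤ K → ∀ i : ℕ, 1 ≤ i → i + 1 ≤ K →
      ∀ θ : ℝ, g K (i - 1) θ = (θ - lam * m (g K i θ)) / (i * μ)) :
    ∀ K₁ K₂ : ℕ, 1 ≤ K₁ → K₁ ≤ K₂ → ∀ l i : ℕ, i + 1 + l = K₁ → ∀ θ : ℝ,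
      g K₂ i θ ≤ g K₁ i θ := by
  intro K₁ K₂ h1 h12 l
  induction l with
  | zero =>
    intro i hi θ
    have hik : i = K₁ - 1 := by omega
    rcases eq_or_lt_of_le h12 with heq | hlt
    · subst heq; exact le_rfl
    · subst hik
      rw [hgtop K₁ h1 θ, hgrec K₂ (by omega) K₁ h1 (by omega) θ]
      have hKpos : (0:ℝ) < (K₁:ℝ) := by exact_mod_cast Nat.lt_of_lt_of_le Nat.zero_lt_one h1
      have hpos : (0:ℝ) < (K₁:ℝ) * μ := mul_pos hKpos hμ
      have h0 : 0 ≤ lam * m (g K₂ K₁ θ) := mul_nonneg hlam.le (hmnn _)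
      have : θ - lam * m (g K₂ K₁ θ) ≤ θ := by linarith
      gcongr
  | succ l IH =>
    intro i hi θ
    have e1 := hgrec K₁ h1 (i+1) (by omega) (by omega) θ
    have e2 := hgrec K₂ (by omega) (i+1) (by omega) (by omega) θ
    simp only [Nat.add_sub_cancel] at e1 e2
    rw [e1, e2]
    have hg := IH (i+1) (by omega) θ
    have hmm := hmanti _ _ hg
    have hipos' : (0:ℝ) < ((i+1 : ℕ):ℝ) * μ := by push_cast; positivity
    have hnum : θ - lam * m (g K₂ (i+1) θ) ≤ θ - lam * m (g K₁ (i+1) θ) := by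
      nlinarith
    gcongr


private lemma aux_fixedLB (m : ℝ → ℝ) (lam μ : ℝ) (hlam : 0 < lam) (hμ : 0 < μ)
    (hmanti : ∀ B B' : ℝ, B ≤ B' → m B' ≤ m B)
    (g : ℕ → ℕ → ℝ → ℝ)
    (hgtop : ∀ K : ℕ, 1 ≤ K → ∀ θ : ℝ, g K (K - 1) θ = θ / (K * μ))
    (hgrec : ∀ K : ℕ, 1 ≤ K → ∀ i : ℕ, 1 ≤ i → i + 1 ≤ K →
      ∀ θ : ℝ, g K (i - 1) θ = (θ - lam * m (g K i θ)) / (i * μ))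
    (θstar : ℕ → ℝ)
    (hθ : ∀ K : ℕ, 1 ≤ K → θstar K = lam * m (g K 0 (θstar K))) :
    ∀ K : ℕ, 1 ≤ K → ∀ s : ℝ, s ≤ lam * m (g K 0 s) → s ≤ θstar K := by
  intro K hK s hs
  by_contra hlt
  push_neg at hlt
  have h1 : g K 0 (θstar K) ≤ g K 0 s :=
    aux_gmono m lam μ hlam hμ hmanti g hgtop hgrec K hK (K-1) 0 (by omega) _ _ hlt.le
  have h2 := hmanti _ _ h1
  have h3 := hθ K hK
  nlinarith

private lemma aux_fixedUB (m : ℝ → ℝ) (lam μ : ℝ) (hlam : 0 < lam) (hμ : 0 < μ)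
    (hmanti : ∀ B B' : ℝ, B ≤ B' → m B' ≤ m B)
    (g : ℕ → ℕ → ℝ → ℝ)
    (hgtop : ∀ K : ℕ, 1 ≤ K → ∀ θ : ℝ, g K (K - 1) θ = θ / (K * μ))
    (hgrec : ∀ K : ℕ, 1 ≤ K → ∀ i : ℕ, 1 ≤ i → i + 1 ≤ K →
      ∀ θ : ℝ, g K (i - 1) θ = (θ - lam * m (g K i θ)) / (i * μ))
    (θstar : ℕ → ℝ)
    (hθ : ∀ K : ℕ, 1 ≤ K → θstar K = lam * m (g K 0 (θstar K))) :
    ∀ K : ℕ, 1 ≤ K → ∀ s : ℝ, lam * m (g K 0 s) ≤ s → θstar K ≤ s := by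
  intro K hK s hs
  by_contra hlt
  push_neg at hlt
  have h1 : g K 0 s ≤ g K 0 (θstar K) :=
    aux_gmono m lam μ hlam hμ hmanti g hgtop hgrec K hK (K-1) 0 (by omega) _ _ hlt.le
  have h2 := hmanti _ _ h1
  have h3 := hθ K hK
  nlinarith

private lemma aux_step (m : ℝ → ℝ) (lam μ : ℝ) (hlam : 0 < lam) (hμ : 0 < μ)
    (hmanti : ∀ B B' : ℝ, B ≤ B' → m B' ≤ m B) (hmnn : ∀ B : ℝ, 0 ≤ m B)
    (g : ℕ → ℕ → ℝ → ℝ)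
    (hgtop : ∀ K : ℕ, 1 ≤ K → ∀ θ : ℝ, g K (K - 1) θ = θ / (K * μ))
    (hgrec : ∀ K : ℕ, 1 ≤ K → ∀ i : ℕ, 1 ≤ i → i + 1 ≤ K →
      ∀ θ : ℝ, g K (i - 1) θ = (θ - lam * m (g K i θ)) / (i * μ))
    (θstar : ℕ → ℝ)
    (hθ : ∀ K : ℕ, 1 ≤ K → θstar K = lam * m (g K 0 (θstar K))) :
    ∀ K : ℕ, 1 ≤ K → θstar (K+1) / ((K:ℝ)+1) ≤ θstar K / (K:ℝ) := by
  intro K hK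
  have hK1 : 1 ≤ K + 1 := by omega
  have hKpos : (0:ℝ) < (K:ℝ) := by exact_mod_cast Nat.lt_of_lt_of_le Nat.zero_lt_one hK
  set θ' := θstar (K+1) with hθ'def
  have hfix : θ' = lam * m (g (K+1) 0 θ') := hθ (K+1) hK1
  clear_value θ'
  have hθ'nn : 0 ≤ θ' := by
    rw [hfix]; exact mul_nonneg hlam.le (hmnn _)
  have hdenpos : (0:ℝ) < ((K:ℝ)+1) * μ := by positivity
  set T := θ' / (((K:ℝ)+1) * μ) with hTdef
  have hθT : θ' = ((K:ℝ)+1) * μ * T := by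
    rw [hTdef]; field_simp
  have hTnn : 0 ≤ T := div_nonneg hθ'nn hdenpos.le
  have hTtop : g (K+1) K θ' = T := by
    have e := hgtop (K+1) hK1 θ'
    simp only [Nat.add_sub_cancel] at e
    rw [e, hTdef]
    push_cast
    ring_nf
  clear_value T
  have hrel : ∀ n : ℕ, 1 ≤ n → n ≤ K →
      ((n:ℕ):ℝ) * μ * g (K+1) (n-1) θ' = θ' - lam * m (g (K+1) n θ') := by
    intro n h1 h2
    have hnpos : (0:ℝ) < (n:ℝ) := by exact_mod_cast Nat.lt_of_lt_of_le Nat.zero_lt_one h1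
    rw [hgrec (K+1) hK1 n h1 (by omega) θ']
    field_simp
  -- M : all g-values at the fixed point are at most T
  have hM : ∀ d i : ℕ, i + d = K → g (K+1) i θ' ≤ T := by
    intro d
    induction d with
    | zero =>
      intro i hi
      rw [show i = K by omega, hTtop]
    | succ d IH =>
      intro i hi
      have hIH1 : g (K+1) (i+1) θ' ≤ T := IH (i+1) (by omega)
      by_contra hPi
      push_neg at hPi
      have hrelj := hrel (i+1) (by omega) (by omega)
      simp only [Nat.add_sub_cancel] at hrelj
      push_cast at hrelj
      have hkey : lam * m T + ((i:ℝ)+1) * μ * T < ((K:ℝ)+1) * μ * T := by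
        have a1 : ((i:ℝ)+1) * μ * T < ((i:ℝ)+1) * μ * g (K+1) i θ' :=
          mul_lt_mul_of_pos_left hPi (by positivity)
        have a2 : lam * m T ≤ lam * m (g (K+1) (i+1) θ') :=
          mul_le_mul_of_nonneg_left (hmanti _ _ hIH1) hlam.le
        linarith [hrelj, hθT]
      have hchain : ∀ l : ℕ, l ≤ i → T < g (K+1) (i - l) θ' := by
        intro l
        induction l with
        | zero => intro _; simpa using hPi
        | succ l IHl =>
          intro hl
          have hIHl := IHl (by omega)
          have h1n : 1 ≤ i - l := by omega
          have hrel' := hrel (i - l) h1n (by omega)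
          have hidx : i - (l+1) = (i - l) - 1 := by omega
          rw [hidx]
          have hcge : (1:ℝ) ≤ ((i - l : ℕ):ℝ) := by exact_mod_cast h1n
          have hcle : ((i - l : ℕ):ℝ) ≤ (i:ℝ)+1 := by
            have h' : (i - l : ℕ) ≤ i + 1 := by omega
            exact_mod_cast h'
          have e1 : lam * m (g (K+1) (i - l) θ') ≤ lam * m T :=
            mul_le_mul_of_nonneg_left (hmanti _ _ hIHl.le) hlam.le
          have e2 : ((i:ℝ)+1) * μ * T <
              ((i - l : ℕ):ℝ) * μ * g (K+1) ((i - l) - 1) θ' := by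
            linarith [hrel', hθT]
          have e3 : ((i - l : ℕ):ℝ) * μ * T ≤ ((i:ℝ)+1) * μ * T := by
            have := mul_le_mul_of_nonneg_right hcle
              (mul_nonneg hμ.le hTnn)
            linarith [this]
          have e4 : ((i - l : ℕ):ℝ) * μ * T <
              ((i - l : ℕ):ℝ) * μ * g (K+1) ((i - l) - 1) θ' := by
            linarith
          have hcμ : (0:ℝ) < ((i - l : ℕ):ℝ) * μ := by
            have : (0:ℝ) < ((i - l : ℕ):ℝ) := by linarith
            positivity
          exact lt_of_mul_lt_mul_left e4 hcμ.le
      have hfin : T < g (K+1) 0 θ' := by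
        have := hchain i le_rfl
        simpa using this
      have hm0 : lam * m (g (K+1) 0 θ') ≤ lam * m T :=
        mul_le_mul_of_nonneg_left (hmanti _ _ hfin.le) hlam.le
      have hjT : (0:ℝ) ≤ ((i:ℝ)+1) * μ * T := by positivity
      linarith [hfix, hθT]
  -- deflation comparison
  set θ'' : ℝ := (K:ℝ) * μ * T with hθ''def
  clear_value θ''
  have hD : ∀ l i : ℕ, i + 1 + l = K → g K i θ'' ≤ g (K+1) (i+1) θ' := by
    intro l
    induction l with
    | zero =>
      intro i hi
      have hik : i = K - 1 := by omega
      subst hik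
      have hi1 : K - 1 + 1 = K := by omega
      rw [hgtop K hK θ'', hi1, hTtop]
      have heq : θ'' / ((K:ℝ) * μ) = T := by
        rw [hθ''def]
        field_simp
      exact le_of_eq heq
    | succ l IH =>
      intro i hi
      have IH' := IH (i+1) (by omega)
      have e1 := hgrec K hK (i+1) (by omega) (by omega) θ''
      have e2 := hgrec (K+1) hK1 (i+2) (by omega) (by omega) θ'
      simp only [Nat.add_sub_cancel] at e1
      simp only [show i + 2 - 1 = i + 1 from rfl] at e2
      rw [e1, e2]
      set a2 : ℝ := lam * m (g (K+1) (i+2) θ') with ha2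
      clear_value a2
      have hmle : a2 ≤ lam * m (g K (i+1) θ'') := by
        rw [ha2]
        exact mul_le_mul_of_nonneg_left (hmanti _ _ IH') hlam.le
      have hrel2 := hrel (i+2) (by omega) (by omega)
      simp only [show i + 2 - 1 = i + 1 from rfl] at hrel2
      push_cast at hrel2
      have hMi : g (K+1) (i+1) θ' ≤ T := hM (K - (i+1)) (i+1) (by omega)
      have hpos1 : (0:ℝ) < ((i+1:ℕ):ℝ) * μ := by push_cast; positivity
      have hpos2 : (0:ℝ) < ((i+2:ℕ):ℝ) * μ := by push_cast; positivity
      rw [div_le_div_iff₀ hpos1 hpos2]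
      push_cast
      have h2 : ((K:ℝ) - (i:ℝ) - 1) * μ * T ≤ a2 := by
        have := mul_le_mul_of_nonneg_left hMi
          (by positivity : (0:ℝ) ≤ ((i:ℝ)+2) * μ)
        linarith [hrel2, hθT, this]
      have step1 : (θ'' - lam * m (g K (i+1) θ'')) * (((i:ℝ)+2) * μ) ≤
          (θ'' - a2) * (((i:ℝ)+2) * μ) := by
        apply mul_le_mul_of_nonneg_right (by linarith) (by positivity)
      have step2 : (θ'' - a2) * (((i:ℝ)+2) * μ) ≤
          (θ' - a2) * (((i:ℝ)+1) * μ) := by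
        rw [hθ''def, hθT]
        linarith [mul_nonneg hμ.le (sub_nonneg.2 h2)]
      linarith
  -- conclude
  have hD0 := hD (K-1) 0 (by omega)
  have hrel1 := hrel 1 le_rfl hK
  simp only [Nat.sub_self] at hrel1
  push_cast at hrel1
  have hM0 : g (K+1) 0 θ' ≤ T := hM K 0 (by omega)
  have hmle' : lam * m (g (K+1) 1 θ') ≤ lam * m (g K 0 θ'') :=
    mul_le_mul_of_nonneg_left (hmanti _ _ hD0) hlam.le
  have hfixK : θ'' ≤ lam * m (g K 0 θ'') := by
    have hμM0 : μ * g (K+1) 0 θ' ≤ μ * T := mul_le_mul_of_nonneg_left hM0 hμ.le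
    linarith [hrel1, hθT]
  have hLB : θ'' ≤ θstar K :=
    aux_fixedLB m lam μ hlam hμ hmanti g hgtop hgrec θstar hθ K hK θ'' hfixK
  have hLB2 : (K:ℝ) * μ * T ≤ θstar K := hθ''def ▸ hLB
  rw [div_le_div_iff₀ (by positivity : (0:ℝ) < (K:ℝ)+1) hKpos]
  have h5 := mul_le_mul_of_nonneg_left hLB2 (by positivity : (0:ℝ) ≤ (K:ℝ)+1)
  nlinarith [h5, hθT, hKpos.le]

private lemma aux_parta (m : ℝ → ℝ) (lam μ : ℝ) (hlam : 0 < lam) (hμ : 0 < μ)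
    (hmanti : ∀ B B' : ℝ, B ≤ B' → m B' ≤ m B) (hmnn : ∀ B : ℝ, 0 ≤ m B)
    (g : ℕ → ℕ → ℝ → ℝ)
    (hgtop : ∀ K : ℕ, 1 ≤ K → ∀ θ : ℝ, g K (K - 1) θ = θ / (K * μ))
    (hgrec : ∀ K : ℕ, 1 ≤ K → ∀ i : ℕ, 1 ≤ i → i + 1 ≤ K →
      ∀ θ : ℝ, g K (i - 1) θ = (θ - lam * m (g K i θ)) / (i * μ))
    (θstar : ℕ → ℝ)
    (hθ : ∀ K : ℕ, 1 ≤ K → θstar K = lam * m (g K 0 (θstar K))) :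
    ∀ K₁ K₂ : ℕ, 1 ≤ K₁ → K₁ ≤ K₂ → θstar K₁ ≤ θstar K₂ := by
  intro K₁ K₂ h1 h12
  apply aux_fixedLB m lam μ hlam hμ hmanti g hgtop hgrec θstar hθ K₂ (h1.trans h12)
  have hc := aux_crossK m lam μ hlam hμ hmanti hmnn g hgtop hgrec K₁ K₂ h1 h12
    (K₁ - 1) 0 (by omega) (θstar K₁)
  have h2 := hmanti _ _ hc
  have h3 := hθ K₁ h1
  nlinarith

private lemma aux_N (m : ℝ → ℝ) (lam μ : ℝ) (hlam : 0 < lam) (hμ : 0 < μ)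
    (hmanti : ∀ B B' : ℝ, B ≤ B' → m B' ≤ m B) (hmnn : ∀ B : ℝ, 0 ≤ m B)
    (g : ℕ → ℕ → ℝ → ℝ)
    (hgtop : ∀ K : ℕ, 1 ≤ K → ∀ θ : ℝ, g K (K - 1) θ = θ / (K * μ))
    (hgrec : ∀ K : ℕ, 1 ≤ K → ∀ i : ℕ, 1 ≤ i → i + 1 ≤ K →
      ∀ θ : ℝ, g K (i - 1) θ = (θ - lam * m (g K i θ)) / (i * μ))
    (θstar : ℕ → ℝ)
    (hθ : ∀ K : ℕ, 1 ≤ K → θstar K = lam * m (g K 0 (θstar K))) :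
    ∀ K₁ K₂ i : ℕ, 1 ≤ K₁ → K₁ ≤ K₂ → i + 1 ≤ K₁ →
      g K₂ i (θstar K₂) ≤ g K₁ i (θstar K₁) := by
  intro K₁ K₂ i h1 h12 hi
  have h2 : 1 ≤ K₂ := h1.trans h12
  have hθle : θstar K₁ ≤ θstar K₂ :=
    aux_parta m lam μ hlam hμ hmanti hmnn g hgtop hgrec θstar hθ K₁ K₂ h1 h12
  rcases eq_or_lt_of_le hθle with heq | hlt
  · calc g K₂ i (θstar K₂) = g K₂ i (θstar K₁) := by rw [heq]
      _ ≤ g K₁ i (θstar K₁) :=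
        aux_crossK m lam μ hlam hμ hmanti hmnn g hgtop hgrec K₁ K₂ h1 h12
          (K₁ - 1 - i) i (by omega) _
  · by_contra hcon
    push_neg at hcon
    have hchain : ∀ l : ℕ, l ≤ i →
        g K₁ (i - l) (θstar K₁) < g K₂ (i - l) (θstar K₂) := by
      intro l
      induction l with
      | zero => intro _; simpa using hcon
      | succ l IH =>
        intro hl
        have h' := IH (by omega)
        have h1n : 1 ≤ i - l := by omega
        have hmle : m (g K₂ (i - l) (θstar K₂)) ≤ m (g K₁ (i - l) (θstar K₁)) :=
          hmanti _ _ h'.le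
        have e1 := hgrec K₁ h1 (i - l) h1n (by omega) (θstar K₁)
        have e2 := hgrec K₂ h2 (i - l) h1n (by omega) (θstar K₂)
        have hidx : i - (l+1) = (i - l) - 1 := by omega
        rw [hidx, e1, e2]
        have hnpos : (0:ℝ) < ((i - l : ℕ):ℝ) * μ := by
          have : (0:ℝ) < ((i - l : ℕ):ℝ) := by exact_mod_cast h1n
          positivity
        rw [div_lt_div_iff₀ hnpos hnpos]
        have hmul := mul_le_mul_of_nonneg_left hmle hlam.le
        nlinarith [hlt, hnpos]
    have hfin : g K₁ 0 (θstar K₁) < g K₂ 0 (θstar K₂) := by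
      have := hchain i le_rfl
      simpa using this
    have hmle0 : m (g K₂ 0 (θstar K₂)) ≤ m (g K₁ 0 (θstar K₁)) := hmanti _ _ hfin.le
    have e1 := hθ K₁ h1
    have e2 := hθ K₂ h2
    nlinarith [mul_le_mul_of_nonneg_left hmle0 hlam.le]

private lemma aux_ustar_mono (G : ℝ → ℝ) (hGanti : Antitone G)
    (ustar : ℝ → ℝ)
    (hu : ∀ B : ℝ, 0 ≤ ustar B ∧
        (∀ v, 0 ≤ v → (v - B) * G v ≤ (ustar B - B) * G (ustar B)) ∧
        (∀ v, 0 ≤ v → (v - B) * G v = (ustar B - B) * G (ustar B) → v = ustar B)) :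
    ∀ B B' : ℝ, B ≤ B' → ustar B ≤ ustar B' := by
  intro B B' hBB'
  obtain ⟨hB0, hBopt, hBuniq⟩ := hu B
  obtain ⟨hB'0, hB'opt, hB'uniq⟩ := hu B'
  by_contra hcon
  push_neg at hcon
  have h1 := hBopt (ustar B') hB'0
  have h2 := hB'opt (ustar B) hB0
  have hGle : G (ustar B) ≤ G (ustar B') := hGanti hcon.le
  have hprod : 0 ≤ (B' - B) * (G (ustar B') - G (ustar B)) :=
    mul_nonneg (by linarith) (by linarith)
  have h3 : (ustar B - B) * G (ustar B) ≤ (ustar B' - B) * G (ustar B') := by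
    nlinarith
  have h4 := hBuniq (ustar B') hB'0 (le_antisymm h1 h3)
  exact absurd h4 (ne_of_lt hcon)

/-- Dependence of the optimal revenue rate on the number of
servers: fixing `λ > 0` and `μ > 0`, with `g_{K−1}^K(θ) = θ/(K·μ)` and
`g_{i−1}^K(θ) = (θ − λ·m(g_i^K(θ)))/(i·μ)`, and `θ*(K)` the (unique) solution
of `θ = λ·m(g_0^K(θ))`, (a) `K ↦ θ*(K)` is nondecreasing; (b) `K ↦ θ*(K)/K`
is nonincreasing; (c) if the maximizer `u*(B)` of `u ↦ (u − B)·Ḡ(u)` over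
`u ≥ 0` is unique for every `B`, then for every fixed state `i` the optimal
price `u*_i(K) = u*(g_i^K(θ*(K)))` is nonincreasing in `K` (for `K > i`). -/
theorem stmt_18
    (G : ℝ → ℝ) (hG0 : ∀ u, 0 ≤ G u) (hG1 : ∀ u, G u ≤ 1) (hGanti : Antitone G)
    (m : ℝ → ℝ)
    (hm : ∀ B : ℝ, IsGreatest ((fun u => (u - B) * G u) '' Set.Ici (0 : ℝ)) (m B))
    (lam μ : ℝ) (hlam : 0 < lam) (hμ : 0 < μ)
    (g : ℕ → ℕ → ℝ → ℝ)
    (hgtop : ∀ K : ℕ, 1 ≤ K → ∀ θ : ℝ, g K (K - 1) θ = θ / (K * μ))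
    (hgrec : ∀ K : ℕ, 1 ≤ K → ∀ i : ℕ, 1 ≤ i → i + 1 ≤ K →
      ∀ θ : ℝ, g K (i - 1) θ = (θ - lam * m (g K i θ)) / (i * μ))
    (θstar : ℕ → ℝ)
    (hθ : ∀ K : ℕ, 1 ≤ K → θstar K = lam * m (g K 0 (θstar K))) :
    (∀ K₁ K₂ : ℕ, 1 ≤ K₁ → K₁ ≤ K₂ → θstar K₁ ≤ θstar K₂) ∧
    (∀ K₁ K₂ : ℕ, 1 ≤ K₁ → K₁ ≤ K₂ → θstar K₂ / K₂ ≤ θstar K₁ / K₁) ∧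
    (∀ ustar : ℝ → ℝ,
      (∀ B : ℝ, 0 ≤ ustar B ∧
        (∀ v, 0 ≤ v → (v - B) * G v ≤ (ustar B - B) * G (ustar B)) ∧
        (∀ v, 0 ≤ v → (v - B) * G v = (ustar B - B) * G (ustar B) → v = ustar B)) →
      ∀ i K₁ K₂ : ℕ, i < K₁ → K₁ ≤ K₂ →
        ustar (g K₂ i (θstar K₂)) ≤ ustar (g K₁ i (θstar K₁))) := by
  have hmanti : ∀ B B' : ℝ, B ≤ B' → m B' ≤ m B := aux_m_anti G hG0 m hm
  have hmnn : ∀ B : ℝ, 0 ≤ m B := aux_m_nonneg G hG0 m hm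
  refine ⟨?_, ?_, ?_⟩
  · exact aux_parta m lam μ hlam hμ hmanti hmnn g hgtop hgrec θstar hθ
  · intro K₁ K₂ h1 h12
    induction K₂, h12 using Nat.le_induction with
    | base => exact le_rfl
    | succ n hn IH =>
      have hstep := aux_step m lam μ hlam hμ hmanti hmnn g hgtop hgrec θstar hθ
        n (h1.trans hn)
      have hcast : ((n+1 : ℕ):ℝ) = (n:ℝ) + 1 := by push_cast; ring
      rw [hcast]
      exact hstep.trans IH
  · intro ustar hu i K₁ K₂ hiK₁ h12
    exact aux_ustar_mono G hGanti ustar hu _ _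
      (aux_N m lam μ hlam hμ hmanti hmnn g hgtop hgrec θstar hθ K₁ K₂ i
        (by omega) h12 (by omega))
end
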